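/- arXiv:1602.02688 — 13 statements merged into one kernel-verified Lean document; each statement's English description precedes it below -/
import Mathlib

section
/- Let X be an infinite set, let G be a subgroup of Sym(X) fully containing FAlt(X), and let ρ ∈ N_{Sym(X)}(G). If there exists r ∈ ℕ such that ρ has finitely many orbits of size r, then the automorphism φ_ρ of G has infinitely many twisted conjugacy classes, i.e. R(φ_ρ) = ∞. -/
/-! For `a ∈ G`, twisted conjugating `a` by `x` conjugates `ρ * a` by `x⁻¹`, so the number of
points on `r`-element orbits of `ρ * a` is a twisted conjugacy invariant. Every element `g` of
`FAlt X` is finitary, and the `r`-element orbits of `ρ * g` not passing through the support of `g`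
are orbits of `ρ`, so this number is finite. Since `FAlt X` is highly transitive on the infinite
set `X`, one can choose `g` so that `ρ * g` cycles any prescribed number of disjoint `r`-tuples,
making the invariant unbounded. -/

/-- `FAlt X`: the subgroup of `Equiv.Perm X` generated by all 3-cycles, i.e. by those
permutations whose support has exactly 3 elements. -/
def FAlt (X : Type*) : Subgroup (Equiv.Perm X) :=
  Subgroup.closure {σ : Equiv.Perm X | {x | σ x ≠ x}.ncard = 3}

/-- Twisted conjugacy: `a` and `b` are `φ`-twisted conjugate if `(φ x)⁻¹ * a * x = b`
for some `x`. -/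
def TwistedConj {G : Type*} [Group G] (φ : G ≃* G) (a b : G) : Prop :=
  ∃ x : G, (φ x)⁻¹ * a * x = b

/-- For `ρ` in the normalizer of `G`, the automorphism `φ_ρ : g ↦ ρ⁻¹ * g * ρ` of `G`. -/
def phiRho {X : Type*} (G : Subgroup (Equiv.Perm X)) (ρ : Equiv.Perm X)
    (hρ : ∀ g : Equiv.Perm X, g ∈ G ↔ ρ⁻¹ * g * ρ ∈ G) : ↥G ≃* ↥G where
  toFun g := ⟨ρ⁻¹ * g * ρ, (hρ g).mp g.2⟩
  invFun g := ⟨ρ * g * ρ⁻¹, (hρ (ρ * (g : Equiv.Perm X) * ρ⁻¹)).mpr (by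
    have h : ρ⁻¹ * (ρ * (g : Equiv.Perm X) * ρ⁻¹) * ρ = (g : Equiv.Perm X) := by group
    rw [h]; exact g.2)⟩
  left_inv g := Subtype.ext (by simp only; group)
  right_inv g := Subtype.ext (by simp only; group)
  map_mul' g h := Subtype.ext (by push_cast; group)

namespace Equiv.Perm

variable {X : Type*}

-- Definitionally `{x | (Set.range fun d : ℤ => (σ ^ d) x).ncard = r}`; as `ncard` of an infinite
-- set is `0`, for `r = 0` these are the points on infinite orbits.
def pointsOnOrbitsOfCard (σ : Perm X) (r : ℕ) : Set X :=
  {x | {y | σ.SameCycle x y}.ncard = r}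

theorem ncard_preimage (g : Perm X) (s : Set X) : (g ⁻¹' s).ncard = s.ncard :=
  Set.ncard_preimage_of_injective_subset_range g.injective (by simp)

theorem pointsOnOrbitsOfCard_conj (g σ : Perm X) (r : ℕ) :
    (g * σ * g⁻¹).pointsOnOrbitsOfCard r = ⇑g⁻¹ ⁻¹' σ.pointsOnOrbitsOfCard r := by
  ext x
  have horbit : {y | (g * σ * g⁻¹).SameCycle x y} = ⇑g⁻¹ ⁻¹' {y | σ.SameCycle (g⁻¹ x) y} := by
    ext y
    exact sameCycle_conj
  simp only [pointsOnOrbitsOfCard, Set.mem_ofPred_eq, Set.mem_preimage, horbit, ncard_preimage]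

theorem ncard_pointsOnOrbitsOfCard_conj (g σ : Perm X) (r : ℕ) :
    ((g * σ * g⁻¹).pointsOnOrbitsOfCard r).ncard = (σ.pointsOnOrbitsOfCard r).ncard := by
  rw [pointsOnOrbitsOfCard_conj, ncard_preimage]

theorem zpow_apply_eq_of_eqOn_sameCycle {σ τ : Perm X} {x : X}
    (h : Set.EqOn σ τ {y | τ.SameCycle x y}) (d : ℤ) : (σ ^ d) x = (τ ^ d) x := by
  induction d using Int.induction_on with
  | zero => rfl
  | succ i ih =>
    rw [add_comm, zpow_add, zpow_add, zpow_one, zpow_one, mul_apply, mul_apply, ih]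
    exact h ⟨i, rfl⟩
  | pred i ih =>
    -- `σ⁻¹ = τ⁻¹` on the orbit, since `τ⁻¹` preserves the orbit, on which `σ = τ`
    rw [sub_eq_neg_add, zpow_add, zpow_add, zpow_neg_one, zpow_neg_one, mul_apply, mul_apply,
      ih, inv_eq_iff_eq, h ⟨-i - 1, ?_⟩]
    · exact (τ.apply_symm_apply _).symm
    · rw [eq_inv_iff_eq, ← mul_apply, ← zpow_one_add, add_sub_cancel]

theorem setOf_sameCycle_eq_of_eqOn {σ τ : Perm X} {x : X}
    (h : Set.EqOn σ τ {y | τ.SameCycle x y}) : {y | σ.SameCycle x y} = {y | τ.SameCycle x y} := by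
  ext y
  simp only [Set.mem_ofPred_eq, SameCycle, zpow_apply_eq_of_eqOn_sameCycle h]

theorem pointsOnOrbitsOfCard_mul_subset (σ g : Perm X) (r : ℕ) :
    (σ * g).pointsOnOrbitsOfCard r ⊆ σ.pointsOnOrbitsOfCard r ∪
      ⋃ d ∈ {x | g x ≠ x} ∩ (σ * g).pointsOnOrbitsOfCard r, {y | (σ * g).SameCycle d y} := by
  intro x hx
  by_cases hmeet : ∃ d, g d ≠ d ∧ (σ * g).SameCycle x d
  · obtain ⟨d, hd, hxd⟩ := hmeet
    have horbit : {y | (σ * g).SameCycle d y} = {y | (σ * g).SameCycle x y} :=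
      Set.ext fun y => ⟨hxd.trans, hxd.symm.trans⟩
    refine Or.inr (Set.mem_biUnion ⟨hd, ?_⟩ hxd.symm)
    rwa [pointsOnOrbitsOfCard, Set.mem_ofPred_eq, horbit]
  · have hagree : Set.EqOn σ (σ * g) {y | (σ * g).SameCycle x y} := fun y hy => by
      rw [mul_apply, not_not.mp fun hy' => hmeet ⟨y, hy', hy⟩]
    left
    rwa [pointsOnOrbitsOfCard, Set.mem_ofPred_eq, setOf_sameCycle_eq_of_eqOn hagree]

theorem finite_pointsOnOrbitsOfCard_mul {σ g : Perm X} {r : ℕ} [NeZero r]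
    (hσ : (σ.pointsOnOrbitsOfCard r).Finite) (hg : {x | g x ≠ x}.Finite) :
    ((σ * g).pointsOnOrbitsOfCard r).Finite := by
  refine (hσ.union ((hg.subset Set.inter_subset_left).biUnion fun d hd => ?_)).subset
    (pointsOnOrbitsOfCard_mul_subset σ g r)
  exact Set.finite_of_ncard_ne_zero (hd.2.symm ▸ NeZero.ne r)

theorem setOf_sameCycle_eq_range {r : ℕ} {π : Perm X} {u : ZMod r → X}
    (hπ : ∀ i, π (u i) = u (i + 1)) (i : ZMod r) : {y | π.SameCycle (u i) y} = Set.range u := by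
  have hzpow (d : ℤ) : ∀ j, (π ^ d) (u j) = u (j + d) := by
    induction d using Int.induction_on with
    | zero => simp
    | succ k ih =>
      intro j
      rw [zpow_add_one, mul_apply, hπ, ih]
      push_cast
      ring_nf
    | pred k ih =>
      intro j
      have hinv : π⁻¹ (u j) = u (j - 1) := by rw [inv_eq_iff_eq, hπ, sub_add_cancel]
      rw [zpow_sub_one, mul_apply, hinv, ih]
      push_cast
      ring_nf
  ext y
  constructor
  · rintro ⟨d, rfl⟩
    exact ⟨i + d, (hzpow d i).symm⟩
  · rintro ⟨j, rfl⟩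
    obtain ⟨d, hd⟩ := ZMod.intCast_surjective (j - i)
    exact ⟨d, by rw [hzpow, hd, add_sub_cancel]⟩

theorem range_subset_pointsOnOrbitsOfCard {r : ℕ} {π : Perm X} {u : ZMod r → X}
    (hu : Function.Injective u) (hπ : ∀ i, π (u i) = u (i + 1)) :
    Set.range u ⊆ π.pointsOnOrbitsOfCard r := by
  rintro _ ⟨i, rfl⟩
  rw [pointsOnOrbitsOfCard, Set.mem_ofPred_eq, setOf_sameCycle_eq_range hπ,
    Set.ncard_range_of_injective hu, Nat.card_zmod]

end Equiv.Perm

section FAlt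

open Equiv Equiv.Perm

variable {X : Type*}

theorem finite_setOf_apply_ne_of_mem_fAlt {g : Perm X} (hg : g ∈ FAlt X) :
    {x | g x ≠ x}.Finite := by
  induction hg using Subgroup.closure_induction with
  | mem σ hσ => exact Set.finite_of_ncard_ne_zero (by rw [Set.mem_ofPred_eq.mp hσ]; norm_num)
  | one => simp
  | mul σ τ _ _ hσ hτ => exact (hσ.union hτ).subset (set_support_mul_subset σ τ)
  | inv σ _ hσ => exact hσ.subset fun x hx hfix => hx (by rw [inv_eq_iff_eq, hfix])

theorem setOf_ofSubtype_apply_ne {p : X → Prop} [DecidablePred p] (σ : Perm (Subtype p)) :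
    {x | ofSubtype σ x ≠ x} = Subtype.val '' {x | σ x ≠ x} := by
  ext x
  by_cases hx : p x
  · simp [ofSubtype_apply_of_mem σ hx, hx, Subtype.ext_iff]
  · simp [ofSubtype_apply_of_not_mem σ hx, hx]

theorem map_ofSubtype_alternatingGroup_le_fAlt [DecidableEq X] (s : Finset X) :
    (alternatingGroup s).map ofSubtype ≤ FAlt X := by
  rw [← closure_three_cycles_eq_alternating, MonoidHom.map_closure]
  refine Subgroup.closure_mono ?_
  rintro _ ⟨σ, hσ, rfl⟩
  rw [Set.mem_ofPred_eq, setOf_ofSubtype_apply_ne,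
    Set.ncard_image_of_injective _ Subtype.val_injective, ← coe_support_eq_set_support,
    Set.ncard_coe_finset, hσ.card_support]

theorem exists_mem_fAlt_apply_eq [Infinite X] {ι : Type*} [Finite ι] (v w : ι ↪ X) :
    ∃ g ∈ FAlt X, ∀ i, g (v i) = w i := by
  classical
  have := Fintype.ofFinite ι
  set e := Fintype.equivFin ι
  obtain ⟨t, hvw, ht⟩ := Infinite.exists_superset_card_eq
    (Finset.univ.map v ∪ Finset.univ.map w) _ le_self_add
  have hn : Fintype.card ι ≤ Nat.card t - 2 := by
    rw [Nat.card_eq_fintype_card, Fintype.card_coe, ht, Nat.add_sub_cancel, ← Finset.card_univ,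
      ← Finset.card_map v]
    exact Finset.card_le_card Finset.subset_union_left
  have := alternatingGroup.isMultiplyPretransitive t
  have := MulAction.isMultiplyPretransitive_of_le (G := alternatingGroup t) hn (Nat.sub_le _ _)
  let restrict (u : ι ↪ X) (hu : ∀ i, u i ∈ t) : Fin (Fintype.card ι) ↪ t :=
    ⟨fun k => ⟨u (e.symm k), hu _⟩, fun a b h => by simpa using h⟩
  obtain ⟨h, hh⟩ := MulAction.exists_smul_eq (alternatingGroup t)
    (restrict v fun i => hvw (by simp)) (restrict w fun i => hvw (by simp))
  refine ⟨ofSubtype (h : Perm t), map_ofSubtype_alternatingGroup_le_fAlt t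
    (Subgroup.mem_map_of_mem _ h.2), fun i => ?_⟩
  obtain ⟨k, rfl⟩ := e.symm.surjective i
  exact (ofSubtype_apply_coe _ _).trans (congrArg Subtype.val (DFunLike.congr_fun hh k))

theorem exists_mem_fAlt_ncard_eq_subset [Infinite X] (ρ : Perm X) (r : ℕ) [NeZero r] (N : ℕ) :
    ∃ g ∈ FAlt X, ∃ s : Set X, s.ncard = N * r ∧ s ⊆ (ρ * g).pointsOnOrbitsOfCard r := by
  let u : Fin N × ZMod r ↪ X := (Fintype.equivFin _).toEmbedding.trans
    (Fin.valEmbedding.trans (Infinite.natEmbedding X))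
  let z : Fin N × ZMod r ↪ X :=
    ((Equiv.prodCongr (Equiv.refl _) (Equiv.addRight 1)).toEmbedding.trans u).trans
      (ρ⁻¹ : Perm X).toEmbedding
  -- `g` sends `u (j, i)` to `ρ⁻¹ (u (j, i + 1))`, so `ρ * g` cycles each block `u (j, ·)`
  obtain ⟨g, hg, hgu⟩ := exists_mem_fAlt_apply_eq u z
  refine ⟨g, hg, Set.range u, ?_, ?_⟩
  · rw [Set.ncard_range_of_injective u.injective, Nat.card_prod, Nat.card_fin, Nat.card_zmod]
  · rintro _ ⟨⟨j, i⟩, rfl⟩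
    have hblock (i : ZMod r) : (ρ * g) (u (j, i)) = u (j, i + 1) := by
      rw [mul_apply, hgu]
      exact ρ.apply_symm_apply _
    exact range_subset_pointsOnOrbitsOfCard (u := fun i => u (j, i))
      (fun a b h => by simpa using u.injective h) hblock ⟨i, rfl⟩

theorem ncard_pointsOnOrbitsOfCard_eq_of_twistedConj {G : Subgroup (Perm X)} {ρ : Perm X}
    {hρ : ∀ g : Perm X, g ∈ G ↔ ρ⁻¹ * g * ρ ∈ G} (r : ℕ) {a b : G}
    (h : TwistedConj (phiRho G ρ hρ) a b) :
    ((ρ * a).pointsOnOrbitsOfCard r).ncard = ((ρ * b).pointsOnOrbitsOfCard r).ncard := by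
  obtain ⟨x, rfl⟩ := h
  have hconj : ρ * ((phiRho G ρ hρ x)⁻¹ * a * x : G) =
      (x : Perm X)⁻¹ * (ρ * a) * (x : Perm X)⁻¹⁻¹ := by
    simp only [phiRho, MulEquiv.coe_mk, Equiv.coe_fn_mk, Subgroup.coe_mul, Subgroup.coe_inv]
    group
  rw [hconj, ncard_pointsOnOrbitsOfCard_conj]

end FAlt

/-- If `G` fully contains `FAlt X` and `ρ ∈ N_{Sym(X)}(G)` has finitely many orbits of some
size `r ≥ 1`, then `R(φ_ρ) = ∞`. -/
theorem rinfinite_of_finitely_many_orbits {X : Type*} [Infinite X]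
    (G : Subgroup (Equiv.Perm X)) (hG : FAlt X ≤ G)
    (ρ : Equiv.Perm X) (hρ : ∀ g : Equiv.Perm X, g ∈ G ↔ ρ⁻¹ * g * ρ ∈ G)
    (r : ℕ) (hr : 0 < r)
    (hfin : {x : X | (Set.range fun d : ℤ => (ρ ^ d) x).ncard = r}.Finite) :
    Infinite (Quot (TwistedConj (phiRho G ρ hρ))) := by
  have := NeZero.of_pos hr
  let ν : Quot (TwistedConj (phiRho G ρ hρ)) → ℕ := Quot.lift
    (fun a => ((ρ * a).pointsOnOrbitsOfCard r).ncard)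
    fun _ _ => ncard_pointsOnOrbitsOfCard_eq_of_twistedConj r
  have hν : ¬BddAbove (Set.range ν) := by
    rintro ⟨B, hB⟩
    obtain ⟨g, hg, s, hs, hsub⟩ := exists_mem_fAlt_ncard_eq_subset ρ r (B + 1)
    have hfinite : ((ρ * g).pointsOnOrbitsOfCard r).Finite :=
      Equiv.Perm.finite_pointsOnOrbitsOfCard_mul hfin (finite_setOf_apply_ne_of_mem_fAlt hg)
    have hle : s.ncard ≤ B :=
      (Set.ncard_le_ncard hsub hfinite).trans (hB ⟨Quot.mk _ ⟨g, hG hg⟩, rfl⟩)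
    nlinarith
  exact not_finite_iff_infinite.mp fun _ => hν (Set.finite_range ν).bddAbove
end

section
/- Let X be a set and let a, b, g ∈ Equiv.Perm X satisfy g⁻¹ * a * g = b and Supp(b) ⊊ Supp(a) (the support of b is a proper subset of the support of a). Then g has an infinite orbit. -/
/-!
Conjugation gives `Supp(b) = g⁻¹ (Supp(a))`, so `Supp(b) ⊆ Supp(a)` says that `g` maps the fixed
points of `a` to fixed points of `a`. A point `x ∈ Supp(a) \ Supp(b)` is sent by `g` to a fixed
point of `a`, and then all its forward iterates stay fixed by `a`; since `x` itself is moved by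
`a`, it never returns, so its `g`-orbit is infinite.
-/

open Function Set

theorem Function.notMem_periodicPts_of_mapsTo_compl {α : Type*} {f : α → α} {s : Set α} {x : α}
    (hf : MapsTo f sᶜ sᶜ) (hx : x ∈ s) (hfx : f x ∉ s) : x ∉ periodicPts f := by
  rintro ⟨_ | n, hpos, hper⟩
  · exact absurd hpos (lt_irrefl 0)
  have : f^[n] (f x) ∉ s := hf.iterate n hfx
  rw [← iterate_succ_apply, hper.eq] at this
  exact this hx

theorem Function.injective_iterate_apply_of_notMem_periodicPts {α : Type*} {f : α → α} {x : α}
    (hf : Injective f) (hx : x ∉ periodicPts f) : Injective fun n : ℕ => f^[n] x := by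
  intro m n h
  by_contra hne
  rcases lt_or_gt_of_ne hne with hlt | hlt
  · exact hx (mk_mem_periodicPts (Nat.sub_pos_of_lt hlt) (iterate_cancel hf h.symm))
  · exact hx (mk_mem_periodicPts (Nat.sub_pos_of_lt hlt) (iterate_cancel hf h))

namespace Equiv.Perm

theorem infinite_range_zpow_apply_of_notMem_periodicPts {α : Type*} {g : Perm α} {x : α}
    (hx : x ∉ periodicPts g) : (range fun d : ℤ => (g ^ d) x).Infinite := by
  refine (infinite_range_of_injective
    (injective_iterate_apply_of_notMem_periodicPts g.injective hx)).mono ?_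
  rintro _ ⟨n, rfl⟩
  exact ⟨n, by simp [iterate_eq_pow]⟩

theorem inv_mul_mul_apply_eq_self_iff {α : Type*} (a g : Perm α) (x : α) :
    (g⁻¹ * a * g) x = x ↔ a (g x) = g x := by
  rw [mul_apply, mul_apply, inv_eq_iff_eq]

end Equiv.Perm

/-- If `g⁻¹ * a * g = b` and the support of `b` is a proper subset of the support of `a`,
then `g` has an infinite orbit. -/
theorem exists_infinite_orbit_of_conj_support_ssubset {X : Type*}
    (a b g : Equiv.Perm X) (hconj : g⁻¹ * a * g = b)
    (hsupp : {x | b x ≠ x} ⊂ {x | a x ≠ x}) :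
    ∃ x : X, (Set.range fun d : ℤ => (g ^ d) x).Infinite := by
  subst hconj
  have hfix : MapsTo g {x | a x ≠ x}ᶜ {x | a x ≠ x}ᶜ := fun x hx => by
    simpa [← Equiv.Perm.inv_mul_mul_apply_eq_self_iff] using compl_subset_compl.2 hsupp.1 hx
  obtain ⟨x, hxa, hxb⟩ := exists_of_ssubset hsupp
  have hgx : g x ∉ {x | a x ≠ x} := by
    simpa [← Equiv.Perm.inv_mul_mul_apply_eq_self_iff] using hxb
  exact ⟨x, Equiv.Perm.infinite_range_zpow_apply_of_notMem_periodicPts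
    (notMem_periodicPts_of_mapsTo_compl hfix hxa hgx)⟩
end

section
/- Let X be an infinite set and let G be a subgroup of Sym(X) fully containing FAlt(X). Then FAlt(X) is a unique minimal normal subgroup of G, i.e. FAlt(X) is a nontrivial normal subgroup of G and FAlt(X) is contained in every nontrivial normal subgroup of G; moreover FAlt(X) is characteristic in G, i.e. every automorphism of G maps FAlt(X) onto FAlt(X). -/
section

open Equiv Subgroup
open scoped commutatorElement

variable {X : Type*}

theorem Equiv.Perm.setOf_conj_apply_ne (g σ : Perm X) :
    {x | (g * σ * g⁻¹) x ≠ x} = g '' {x | σ x ≠ x} := by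
  ext x
  simp [Set.mem_image_equiv, ← Equiv.eq_symm_apply]

instance fAlt_normal : (FAlt X).Normal := by
  rw [← normalizer_eq_top_iff, eq_top_iff]
  refine le_trans ?_ (normalizer_le_normalizer_closure _)
  intro g _ σ
  simp only [Set.mem_ofPred_eq, Perm.setOf_conj_apply_ne,
    Set.ncard_image_of_injective _ g.injective]

section ThreeCycle

variable [DecidableEq X] {a b c d : X}

/-- The 3-cycle `a ↦ b ↦ c ↦ a`. -/
def threeCycle (a b c : X) : Perm X := swap a b * swap b c

theorem threeCycle_apply (hab : a ≠ b) (hac : a ≠ c) (hbc : b ≠ c) (x : X) :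
    threeCycle a b c x = if x = a then b else if x = b then c else if x = c then a else x := by
  simp only [threeCycle, Perm.mul_apply, swap_apply_def]
  split_ifs <;> simp_all

theorem setOf_threeCycle_apply_ne (hab : a ≠ b) (hac : a ≠ c) (hbc : b ≠ c) :
    {x | threeCycle a b c x ≠ x} = {a, b, c} := by
  ext x
  simp only [Set.mem_ofPred_eq, threeCycle_apply hab hac hbc, Set.mem_insert_iff,
    Set.mem_singleton_iff]
  split_ifs <;> simp_all [eq_comm]

theorem threeCycle_mem_fAlt (hab : a ≠ b) (hac : a ≠ c) (hbc : b ≠ c) :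
    threeCycle a b c ∈ FAlt X :=
  subset_closure <| by
    simp only [Set.mem_ofPred_eq, setOf_threeCycle_apply_ne hab hac hbc]
    exact Set.ncard_eq_three.2 ⟨a, b, c, hab, hac, hbc, rfl⟩

theorem conj_threeCycle (g : Perm X) (a b c : X) :
    g * threeCycle a b c * g⁻¹ = threeCycle (g a) (g b) (g c) := by
  simp only [threeCycle, swap_apply_apply]
  group

theorem threeCycle_eq_mul (hab : a ≠ b) (hac : a ≠ c) (had : a ≠ d) (hbc : b ≠ c) (hbd : b ≠ d)
    (hcd : c ≠ d) : threeCycle b c d = threeCycle a b c * threeCycle a c d := by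
  ext x
  simp only [Perm.mul_apply, threeCycle_apply hab hac hbc, threeCycle_apply hac had hcd,
    threeCycle_apply hbc hbd hcd]
  split_ifs <;> simp_all

theorem eq_threeCycle_of_ncard_eq_three {σ : Perm X} (hσ : {x | σ x ≠ x}.ncard = 3) :
    ∃ a b c, a ≠ b ∧ a ≠ c ∧ b ≠ c ∧ σ = threeCycle a b c := by
  obtain ⟨x, y, z, hxy, hxz, hyz, hS⟩ := Set.ncard_eq_three.1 hσ
  have h : ∀ u, σ u ≠ u ↔ u = x ∨ u = y ∨ u = z := fun u => by simpa using Set.ext_iff.1 hS u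
  -- `σ` permutes `{x, y, z}` without fixed points, so it is one of the two 3-cycles on it.
  have hσx := h (σ x)
  have hσy := h (σ y)
  have hσz := h (σ z)
  by_cases hσxy : σ x = y
  · refine ⟨x, y, z, hxy, hxz, hyz, Equiv.ext fun u => ?_⟩
    rw [threeCycle_apply hxy hxz hyz]
    grind [σ.injective]
  · refine ⟨x, z, y, hxz, hxy, hyz.symm, Equiv.ext fun u => ?_⟩
    rw [threeCycle_apply hxz hxy hyz.symm]
    grind [σ.injective]

theorem threeCycle_ne_one (hab : a ≠ b) (hac : a ≠ c) (hbc : b ≠ c) : threeCycle a b c ≠ 1 :=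
  fun h => hab <| by simpa [threeCycle_apply hab hac hbc, eq_comm] using congr($h a)

theorem exists_mem_fAlt_apply_eq_s5 [Infinite X] {K : Set X} (hK : K.Finite) {u v : X}
    (hu : u ∉ K) (hv : v ∉ K) : ∃ g ∈ FAlt X, g u = v ∧ ∀ k ∈ K, g k = k := by
  by_cases huv : u = v
  · exact ⟨1, one_mem _, huv, fun _ _ => rfl⟩
  obtain ⟨w, hw⟩ := (hK.union (Set.toFinite {u, v})).infinite_compl.nonempty
  simp only [Set.mem_compl_iff, Set.mem_union, Set.mem_insert_iff, Set.mem_singleton_iff,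
    not_or] at hw
  have huw : u ≠ w := fun h => hw.2.1 h.symm
  have hvw : v ≠ w := fun h => hw.2.2 h.symm
  refine ⟨threeCycle u v w, threeCycle_mem_fAlt huv huw hvw, by simp [threeCycle_apply huv huw hvw],
    fun k hk => ?_⟩
  rw [threeCycle_apply huv huw hvw]
  grind

theorem exists_mem_fAlt_conj_threeCycle_eq [Infinite X] {x y z : X} (hab : a ≠ b) (hac : a ≠ c)
    (hbc : b ≠ c) (hxy : x ≠ y) (hxz : x ≠ z) (hyz : y ≠ z) :
    ∃ g ∈ FAlt X, g * threeCycle a b c * g⁻¹ = threeCycle x y z := by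
  obtain ⟨g₁, hg₁, hg₁a, -⟩ := exists_mem_fAlt_apply_eq_s5 Set.finite_empty (u := a) (v := x)
    (Set.notMem_empty _) (Set.notMem_empty _)
  obtain ⟨g₂, hg₂, hg₂b, hg₂K⟩ := exists_mem_fAlt_apply_eq_s5 (Set.finite_singleton x) (u := g₁ b)
    (v := y) (by simpa [← hg₁a] using hab.symm) (by simpa using hxy.symm)
  obtain ⟨g₃, hg₃, hg₃c, hg₃K⟩ := exists_mem_fAlt_apply_eq_s5 (Set.toFinite {x, y})
    (u := g₂ (g₁ c)) (v := z)
    (by rw [← hg₂K x rfl, ← hg₁a, ← hg₂b]; simpa using ⟨hac.symm, hbc.symm⟩)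
    (by simpa using ⟨hxz.symm, hyz.symm⟩)
  refine ⟨g₃ * g₂ * g₁, mul_mem (mul_mem hg₃ hg₂) hg₁, ?_⟩
  rw [conj_threeCycle]
  simp only [Perm.mul_apply, hg₁a, hg₂K x rfl, hg₂b, hg₃c, hg₃K x (by simp), hg₃K y (by simp)]

end ThreeCycle

theorem commutatorElement_mem_of_mem_normalizer {G : Type*} [Group G] {N : Subgroup G} {g h : G}
    (hg : g ∈ N) (hh : h ∈ normalizer (N : Set G)) : ⁅g, h⁆ ∈ N := by
  rw [commutatorElement_def, mul_assoc, mul_assoc]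
  exact mul_mem hg (by simpa [mul_assoc] using (mem_normalizer_iff.1 hh _).1 (inv_mem hg))

theorem Equiv.Perm.setOf_commutatorElement_apply_ne_subset (σ τ : Perm X) :
    {x | ⁅σ, τ⁆ x ≠ x} ⊆ {x | τ x ≠ x} ∪ σ '' {x | τ x ≠ x} := by
  intro x hx
  rw [← Perm.setOf_conj_apply_ne]
  by_contra! h
  simp only [Set.mem_union, Set.mem_ofPred_eq, not_or, not_not] at h
  apply hx
  rw [commutatorElement_def, Perm.mul_apply, Perm.inv_eq_iff_eq.2 h.1.symm]
  exact h.2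

section Commutator

variable [DecidableEq X] {a c d : X}

theorem commutatorElement_threeCycle_apply {σ : Perm X} (hac : a ≠ c) (had : a ≠ d) (hcd : c ≠ d)
    (hσa : σ a ∉ ({a, c, d} : Set X)) : ⁅σ, threeCycle a c d⁆ (σ a) = σ c := by
  simp only [Set.mem_insert_iff, Set.mem_singleton_iff, not_or] at hσa
  have hfix : threeCycle a c d (σ a) = σ a := by
    rw [threeCycle_apply hac had hcd]; simp [hσa.1, hσa.2.1, hσa.2.2]
  rw [commutatorElement_def, Perm.mul_apply, Perm.inv_eq_iff_eq.2 hfix.symm]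
  simp [threeCycle_apply hac had hcd]

theorem commutatorElement_threeCycle_of_apply_eq {π : Perm X} (ha : π a ≠ a) (hc : π c = c)
    (hd : π d = d) (hcd : c ≠ d) : ⁅π, threeCycle a c d⁆ = threeCycle a (π a) c := by
  have hac : a ≠ c := fun h => ha (h ▸ hc)
  have had : a ≠ d := fun h => ha (h ▸ hd)
  have hπc : π a ≠ c := fun h => ha (π.injective (by rw [h, hc]))
  have hπd : π a ≠ d := fun h => ha (π.injective (by rw [h, hd]))
  rw [commutatorElement_def, conj_threeCycle, hc, hd,
    threeCycle_eq_mul (Ne.symm ha) hac had hπc hπd hcd, mul_inv_cancel_right]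

end Commutator

section Minimality

variable [Infinite X] {N : Subgroup (Perm X)}

theorem exists_mem_ne_one_finite_of_le_normalizer (hN : FAlt X ≤ normalizer (N : Set (Perm X)))
    {σ : Perm X} (hσN : σ ∈ N) (hσ : σ ≠ 1) :
    ∃ π ∈ N, π ≠ 1 ∧ {x | π x ≠ x}.Finite := by
  classical
  obtain ⟨a, ha⟩ : ∃ a, σ a ≠ a := by simpa [Equiv.ext_iff] using hσ
  obtain ⟨c, hc⟩ := Infinite.exists_notMem_finset {a, σ a}
  obtain ⟨d, hd⟩ := Infinite.exists_notMem_finset {a, σ a, c}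
  simp only [Finset.mem_insert, Finset.mem_singleton, not_or] at hc hd
  have hac : a ≠ c := Ne.symm hc.1
  have had : a ≠ d := Ne.symm hd.1
  have hcd : c ≠ d := Ne.symm hd.2.2
  have hσa : σ a ∉ ({a, c, d} : Set X) := by simpa using ⟨ha, Ne.symm hc.2, Ne.symm hd.2.1⟩
  refine ⟨⁅σ, threeCycle a c d⁆,
    commutatorElement_mem_of_mem_normalizer hσN (hN (threeCycle_mem_fAlt hac had hcd)),
    fun h => hc.1 (σ.injective ?_), ?_⟩
  · rw [← commutatorElement_threeCycle_apply hac had hcd hσa, h, Perm.one_apply]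
  · refine (Set.toFinite ({a, c, d} ∪ σ '' {a, c, d})).subset ?_
    rw [← setOf_threeCycle_apply_ne hac had hcd]
    exact Perm.setOf_commutatorElement_apply_ne_subset σ _

theorem exists_threeCycle_mem_of_le_normalizer [DecidableEq X]
    (hN : FAlt X ≤ normalizer (N : Set (Perm X))) {π : Perm X} (hπN : π ∈ N) (hπ : π ≠ 1)
    (hπfin : {x | π x ≠ x}.Finite) :
    ∃ a b c, a ≠ b ∧ a ≠ c ∧ b ≠ c ∧ threeCycle a b c ∈ N := by
  obtain ⟨a, ha⟩ : ∃ a, π a ≠ a := by simpa [Equiv.ext_iff] using hπ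
  obtain ⟨c, hc⟩ := hπfin.infinite_compl.nonempty
  obtain ⟨d, hd⟩ := (hπfin.union (Set.finite_singleton c)).infinite_compl.nonempty
  simp only [Set.mem_compl_iff, Set.mem_union, Set.mem_ofPred_eq, Set.mem_singleton_iff, not_or,
    not_not] at hc hd
  have hac : a ≠ c := fun h => ha (h ▸ hc)
  have had : a ≠ d := fun h => ha (h ▸ hd.1)
  have hcd : c ≠ d := Ne.symm hd.2
  have hπc : π a ≠ c := fun h => ha (π.injective (by rw [h, hc]))
  refine ⟨a, π a, c, Ne.symm ha, hac, hπc, ?_⟩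
  rw [← commutatorElement_threeCycle_of_apply_eq ha hc hd.1 hcd]
  exact commutatorElement_mem_of_mem_normalizer hπN (hN (threeCycle_mem_fAlt hac had hcd))

theorem fAlt_le_of_le_normalizer (hN : FAlt X ≤ normalizer (N : Set (Perm X))) (hN1 : N ≠ ⊥) :
    FAlt X ≤ N := by
  classical
  obtain ⟨σ, hσN, hσ⟩ := N.bot_or_exists_ne_one.resolve_left hN1
  obtain ⟨π, hπN, hπ, hπfin⟩ := exists_mem_ne_one_finite_of_le_normalizer hN hσN hσ
  obtain ⟨a, b, c, hab, hac, hbc, hmem⟩ :=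
    exists_threeCycle_mem_of_le_normalizer hN hπN hπ hπfin
  refine (closure_le N).2 fun τ hτ => ?_
  obtain ⟨x, y, z, hxy, hxz, hyz, rfl⟩ := eq_threeCycle_of_ncard_eq_three hτ
  obtain ⟨g, hg, hconj⟩ := exists_mem_fAlt_conj_threeCycle_eq hab hac hbc hxy hxz hyz
  rw [SetLike.mem_coe, ← hconj]
  exact (mem_normalizer_iff.1 (hN hg) _).1 hmem

theorem fAlt_subgroupOf_le {G : Subgroup (Perm X)} (hG : FAlt X ≤ G) {N : Subgroup G} [N.Normal]
    (hN : N ≠ ⊥) : (FAlt X).subgroupOf G ≤ N := by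
  have hle : FAlt X ≤ N.map G.subtype := by
    refine fAlt_le_of_le_normalizer (hG.trans ?_) ?_
    · calc G = (normalizer (N : Set G)).map G.subtype := by
            rw [normalizer_eq_top, ← MonoidHom.range_eq_map, range_subtype]
        _ ≤ _ := le_normalizer_map _
    · rwa [Ne, map_eq_bot_iff_of_injective _ G.subtype_injective]
  intro g hg
  exact (mem_map_iff_mem G.subtype_injective).1 (hle hg)

end Minimality

theorem fAlt_ne_bot [Infinite X] : FAlt X ≠ ⊥ := by
  classical
  let f := Infinite.natEmbedding X
  have h01 : f 0 ≠ f 1 := f.injective.ne (by decide)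
  have h02 : f 0 ≠ f 2 := f.injective.ne (by decide)
  have h12 : f 1 ≠ f 2 := f.injective.ne (by decide)
  exact fun h => threeCycle_ne_one h01 h02 h12 (by simpa [h] using threeCycle_mem_fAlt h01 h02 h12)

theorem Subgroup.characteristic_of_forall_normal_le {G : Type*} [Group G] {H : Subgroup G}
    [hH : H.Normal] (hH1 : H ≠ ⊥) (hmin : ∀ N : Subgroup G, N.Normal → N ≠ ⊥ → H ≤ N) : H.Characteristic :=
  characteristic_iff_le_map.2 fun φ => hmin _ (hH.map _ φ.surjective)
    (by rwa [Ne, map_eq_bot_iff_of_injective _ φ.injective])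

end

/-- If `G` fully contains `FAlt X` then `FAlt X` is the unique minimal normal subgroup
of `G`, and it is characteristic in `G`. -/
theorem fAlt_unique_minimal_normal_and_characteristic {X : Type*} [Infinite X]
    (G : Subgroup (Equiv.Perm X)) (hG : FAlt X ≤ G) :
    ((FAlt X).subgroupOf G).Normal ∧
    (FAlt X).subgroupOf G ≠ ⊥ ∧
    (∀ N : Subgroup ↥G, N.Normal → N ≠ ⊥ → (FAlt X).subgroupOf G ≤ N) ∧
    (∀ φ : ↥G ≃* ↥G,
      Subgroup.map (φ : ↥G →* ↥G) ((FAlt X).subgroupOf G) = (FAlt X).subgroupOf G) := by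
  have hne : (FAlt X).subgroupOf G ≠ ⊥ := by
    rw [Ne, Subgroup.subgroupOf_eq_bot, disjoint_of_le_iff_left_eq_bot hG]
    exact fAlt_ne_bot
  have hmin (N : Subgroup G) (hN : N.Normal) (hN1 : N ≠ ⊥) : (FAlt X).subgroupOf G ≤ N :=
    fAlt_subgroupOf_le hG hN1
  exact ⟨inferInstance, hne, hmin,
    Subgroup.characteristic_iff_map_eq.1 (Subgroup.characteristic_of_forall_normal_le hne hmin)⟩
end

section
/- Let X be an infinite set and let G be a subgroup of Sym(X) with FSym(X) ≤ G. Then FSym(X) is characteristic in G, i.e. every automorphism of G maps FSym(X) onto FSym(X). -/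
/-- `FSym X`: the subgroup of `Equiv.Perm X` of permutations with finite support. -/
def FSym (X : Type*) : Subgroup (Equiv.Perm X) where
  carrier := {σ | {x | σ x ≠ x}.Finite}
  one_mem' := by simp
  mul_mem' := by
    intro a b ha hb
    refine (ha.union hb).subset fun x hx => ?_
    by_cases h1 : a x = x
    · by_cases h2 : b x = x
      · exact absurd (by simp [Equiv.Perm.mul_apply, h2, h1]) hx
      · exact Or.inr h2
    · exact Or.inl h1
  inv_mem' := by
    intro a ha
    refine ha.subset fun x hx => ?_
    intro h
    exact hx (by nth_rewrite 1 [← h]; exact Equiv.symm_apply_apply a x)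

/-!
Call `g` swap-like if `g ≠ 1`, `g ^ 2 = 1` and `(g * (h * g * h⁻¹)) ^ 6 = 1` for every `h`; this is
preserved by automorphisms. Transpositions of `G` are swap-like, since a product of two
transpositions has order 1, 2 or 3. Conversely, let `t ∈ G` be an involution swapping `a ↔ b`
and `c ↔ d`. If `t` fixes a point `e`, the product of `t` with its conjugate by `(b c)(d e)`
contains the 5-cycle `(a d c b e)`; otherwise, `X` being infinite, `t` also swaps some `e ↔ f`
and `g ↔ h`, and its product with its conjugate by `(b c)(d e)(f g)` contains a 4-cycle. So the
swap-like elements of `G` are exactly its transpositions, which generate `FSym X`.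
-/

open Equiv Function Subgroup

namespace Equiv

variable {X : Type*} [DecidableEq X]

theorem swap_mul_swap_same_pow_three {x y z : X} (hxy : x ≠ y) (hxz : x ≠ z) (hyz : y ≠ z) :
    (swap x y * swap x z) ^ 3 = 1 := by
  have h₁ : swap x y * swap x z * swap x y = swap y z := by
    rw [swap_comm x z, swap_mul_swap_mul_swap hxz.symm hyz.symm]
  have h₂ : swap x z * swap x y * swap x z = swap z y := by
    rw [swap_comm x y, swap_mul_swap_mul_swap hxy.symm hyz]
  calc (swap x y * swap x z) ^ 3
      = (swap x y * swap x z * swap x y) * (swap x z * swap x y * swap x z) := by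
        simp only [pow_succ, pow_zero, one_mul, mul_assoc]
    _ = 1 := by rw [h₁, h₂, swap_comm z y, swap_mul_self]

theorem swap_pow_six (x y : X) : swap x y ^ 6 = 1 := by
  rw [show 6 = 2 * 3 by rfl, pow_mul, sq, swap_mul_self, one_pow]

theorem swap_mul_swap_same_pow_six (x y z : X) : (swap x y * swap x z) ^ 6 = 1 := by
  rcases eq_or_ne x y with rfl | hxy
  · rw [swap_self, ← Perm.one_def, one_mul, swap_pow_six]
  rcases eq_or_ne x z with rfl | hxz
  · rw [swap_self, ← Perm.one_def, mul_one, swap_pow_six]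
  rcases eq_or_ne y z with rfl | hyz
  · rw [swap_mul_self, one_pow]
  rw [show 6 = 3 * 2 by rfl, pow_mul, swap_mul_swap_same_pow_three hxy hxz hyz, one_pow]

theorem swap_mul_swap_pow_six (x y a b : X) : (swap x y * swap a b) ^ 6 = 1 := by
  by_cases hax : a = x
  · subst hax; exact swap_mul_swap_same_pow_six a y b
  by_cases hay : a = y
  · subst hay; rw [swap_comm x a]; exact swap_mul_swap_same_pow_six a x b
  by_cases hbx : b = x
  · subst hbx; rw [swap_comm a b]; exact swap_mul_swap_same_pow_six b y a
  by_cases hby : b = y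
  · subst hby; rw [swap_comm x b, swap_comm a b]; exact swap_mul_swap_same_pow_six b x a
  have hcomm : Commute (swap x y) (swap a b) := by
    rw [commute_iff_eq, ← mul_inv_eq_iff_eq_mul, ← swap_apply_apply,
      swap_apply_of_ne_of_ne hax hay, swap_apply_of_ne_of_ne hbx hby]
  rw [hcomm.mul_pow, swap_pow_six, swap_pow_six, one_mul]

end Equiv

namespace Function.Semiconj

variable {X α : Type*} {v : α → X}

theorem perm_mul {σ' τ' : Perm α} {σ τ : Perm X} (hσ : Semiconj v σ' σ) (hτ : Semiconj v τ' τ) :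
    Semiconj v ⇑(σ' * τ') ⇑(σ * τ) :=
  hσ.comp_right hτ

theorem perm_inv {σ' : Perm α} {σ : Perm X} (hσ : Semiconj v σ' σ) : Semiconj v ⇑σ'⁻¹ ⇑σ⁻¹ :=
  hσ.inverses_right σ'.right_inv σ.left_inv

theorem perm_pow {σ' : Perm α} {σ : Perm X} (hσ : Semiconj v σ' σ) (n : ℕ) :
    Semiconj v ⇑(σ' ^ n) ⇑(σ ^ n) := by
  simpa only [Perm.coe_pow] using hσ.iterate_right n

end Function.Semiconj

theorem viaEmbedding_mem_fSym {X α : Type*} [Finite α] (π : Perm α) (v : α ↪ X) :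
    π.viaEmbedding v ∈ FSym X :=
  (Set.finite_range v).subset fun _ hx =>
    by_contra fun h => hx (π.viaEmbedding_apply_of_notMem v _ h)

/-- `t` acts on the finite `t`-invariant set `Set.range v` as `τ` acts on `α`, so the product can
be computed in `Perm α`. -/
theorem exists_mem_fSym_conj_mul_pow_ne_one {X α : Type*} [Finite α] (v : α ↪ X) {τ : Perm α}
    {t : Perm X} (ht : Semiconj v τ t) (π : Perm α) {n : ℕ} (hn : (τ * (π * τ * π⁻¹)) ^ n ≠ 1) :
    ∃ π ∈ FSym X, (t * (π * t * π⁻¹)) ^ n ≠ 1 := by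
  refine ⟨π.viaEmbedding v, viaEmbedding_mem_fSym π v,
    fun h => hn (Perm.ext fun i => v.injective ?_)⟩
  have hπ : Semiconj v π (π.viaEmbedding v) := fun i => (π.viaEmbedding_apply v i).symm
  simpa [h] using (ht.perm_mul ((hπ.perm_mul ht).perm_mul hπ.perm_inv)).perm_pow n i

theorem fSym_eq_closure_isSwap (X : Type*) [DecidableEq X] :
    FSym X = closure {σ : Perm X | σ.IsSwap} := by
  ext σ
  rw [mem_closure_isSwap (S := {σ : Perm X | σ.IsSwap}) fun _ h => h]
  have horbit (x y : X) : y ∈ MulAction.orbit (closure {σ : Perm X | σ.IsSwap}) x := by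
    rcases eq_or_ne x y with rfl | hxy
    · exact MulAction.mem_orbit_self x
    · exact ⟨⟨swap x y, subset_closure ⟨x, y, hxy, rfl⟩⟩, swap_apply_left x y⟩
  simp only [horbit, implies_true, and_true]
  rfl

namespace Equiv.Perm

variable {X : Type*} {t : Perm X}

theorem eq_swap_of_forall_apply_ne_self [DecidableEq X] (ht : Involutive t) {a : X}
    (h : ∀ z, t z ≠ z → z = a ∨ z = t a) : t = swap a (t a) := by
  ext z
  rcases eq_or_ne z a with rfl | hza
  · rw [swap_apply_left]
  rcases eq_or_ne z (t a) with rfl | hzb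
  · rw [swap_apply_right, ht a]
  rw [swap_apply_of_ne_of_ne hza hzb]
  by_contra hz
  exact (h z hz).elim hza hzb

theorem exists_mem_fSym_conj_mul_pow_six_ne_one_of_apply_eq_self (ht : Involutive t) {a c e : X}
    (ha : t a ≠ a) (hc : t c ≠ c) (hca : c ≠ a ∧ c ≠ t a) (he : t e = e) :
    ∃ π ∈ FSym X, (t * (π * t * π⁻¹)) ^ 6 ≠ 1 := by
  have hv : Injective ![a, t a, c, t c, e] := by
    simp only [Injective, Fin.forall_fin_succ, Matrix.cons_val_zero, Matrix.cons_val_succ,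
      Matrix.cons_val_fin_one, IsEmpty.forall_iff, Fin.succ_inj, Fin.succ_ne_zero,
      (Fin.succ_ne_zero _).symm, t.apply_eq_iff_eq]
    grind [ht.eq_iff]
  refine exists_mem_fSym_conj_mul_pow_ne_one ⟨_, hv⟩ (τ := swap 0 1 * swap 2 3)
    (fun i => ?_) (swap 1 2 * swap 3 4) (by decide +kernel)
  fin_cases i <;> simp [ht _, Perm.mul_apply, swap_apply_def, he]

theorem exists_mem_fSym_conj_mul_pow_six_ne_one_of_four_orbits (ht : Involutive t)
    {a c e g : X} (ha : t a ≠ a) (hc : t c ≠ c) (he : t e ≠ e) (hg : t g ≠ g)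
    (hca : c ∉ ({a, t a} : Set X)) (hea : e ∉ ({a, t a, c, t c} : Set X))
    (hga : g ∉ ({a, t a, c, t c, e, t e} : Set X)) :
    ∃ π ∈ FSym X, (t * (π * t * π⁻¹)) ^ 6 ≠ 1 := by
  simp only [Set.mem_insert_iff, Set.mem_singleton_iff, not_or] at hca hea hga
  have hv : Injective ![a, t a, c, t c, e, t e, g, t g] := by
    simp only [Injective, Fin.forall_fin_succ, Matrix.cons_val_zero, Matrix.cons_val_succ,
      Matrix.cons_val_fin_one, IsEmpty.forall_iff, Fin.succ_inj, Fin.succ_ne_zero,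
      (Fin.succ_ne_zero _).symm, t.apply_eq_iff_eq]
    grind [ht.eq_iff]
  refine exists_mem_fSym_conj_mul_pow_ne_one ⟨_, hv⟩
    (τ := swap 0 1 * swap 2 3 * swap 4 5 * swap 6 7) (fun i => ?_)
    (swap 1 2 * swap 3 4 * swap 5 6) (by decide +kernel)
  fin_cases i <;> simp [ht _, Perm.mul_apply, swap_apply_def]

theorem isSwap_of_forall_conj_mul_pow_six_eq_one [DecidableEq X] [Infinite X] (h1 : t ≠ 1)
    (ht : Involutive t) (h : ∀ π ∈ FSym X, (t * (π * t * π⁻¹)) ^ 6 = 1) : t.IsSwap := by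
  by_contra hns
  obtain ⟨a, ha⟩ : ∃ a, t a ≠ a := not_forall.mp fun h' => h1 (Perm.ext h')
  obtain ⟨c, hc, hca⟩ : ∃ c, t c ≠ c ∧ c ∉ ({a, t a} : Set X) := by
    by_contra! hc
    exact hns ⟨a, t a, ha.symm, eq_swap_of_forall_apply_ne_self ht hc⟩
  suffices ∃ π ∈ FSym X, (t * (π * t * π⁻¹)) ^ 6 ≠ 1 by
    obtain ⟨π, hπ, hne⟩ := this
    exact hne (h π hπ)
  by_cases hfix : ∃ e, t e = e
  · obtain ⟨e, he⟩ := hfix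
    exact exists_mem_fSym_conj_mul_pow_six_ne_one_of_apply_eq_self ht ha hc (by simpa using hca) he
  push Not at hfix
  obtain ⟨e, he⟩ := Infinite.exists_notMem_finset ({a, t a, c, t c} : Finset X)
  obtain ⟨g, hg⟩ := Infinite.exists_notMem_finset ({a, t a, c, t c, e, t e} : Finset X)
  exact exists_mem_fSym_conj_mul_pow_six_ne_one_of_four_orbits ht ha hc (hfix e) (hfix g) hca
    (by simpa using he) (by simpa using hg)

end Equiv.Perm

def IsSwapLike {M : Type*} [Group M] (g : M) : Prop :=
  g ≠ 1 ∧ g ^ 2 = 1 ∧ ∀ h : M, (g * (h * g * h⁻¹)) ^ 6 = 1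

theorem IsSwapLike.map {M N : Type*} [Group M] [Group N] {g : M} (hg : IsSwapLike g)
    (e : M ≃* N) : IsSwapLike (e g) := by
  obtain ⟨h1, h2, h6⟩ := hg
  refine ⟨(map_ne_one_iff e e.injective).mpr h1, by rw [← map_pow, h2, map_one], fun h => ?_⟩
  rw [← e.apply_symm_apply h, ← map_inv, ← map_mul, ← map_mul, ← map_mul, ← map_pow, h6, map_one]

theorem MulEquiv.image_setOf_isSwapLike {M : Type*} [Group M] (e : M ≃* M) :
    e '' {g | IsSwapLike g} = {g | IsSwapLike g} :=
  Set.Subset.antisymm (Set.image_subset_iff.mpr fun _ hg => hg.map e)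
    fun g hg => ⟨e.symm g, hg.map e.symm, e.apply_symm_apply g⟩

theorem isSwapLike_iff_isSwap {X : Type*} [DecidableEq X] [Infinite X] {G : Subgroup (Perm X)}
    (hG : FSym X ≤ G) {g : G} : IsSwapLike g ↔ (g : Perm X).IsSwap := by
  constructor
  · rintro ⟨h1, h2, h6⟩
    refine Perm.isSwap_of_forall_conj_mul_pow_six_eq_one (by exact_mod_cast h1) ?_ fun π hπ => ?_
    · exact involutive_iff_iter_2_eq_id.mpr (by rw [← Perm.coe_pow, ← coe_pow, h2]; rfl)
    · simpa using congr_arg Subtype.val (h6 ⟨π, hG hπ⟩)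
  · rintro ⟨x, y, hxy, hg⟩
    refine ⟨fun h => hxy ?_, Subtype.ext ?_, fun h => Subtype.ext ?_⟩
    · simpa [h] using congr_arg (· x) hg
    · simp [sq, hg]
    · simp only [coe_pow, coe_mul, coe_inv, hg, OneMemClass.coe_one, ← swap_apply_apply]
      exact swap_mul_swap_pow_six x y _ _

theorem Subgroup.subgroupOf_closure {G : Type*} [Group G] {H : Subgroup G} {s : Set G}
    (hs : s ⊆ H) : (closure s).subgroupOf H = closure (H.subtype ⁻¹' s) := by
  apply map_injective H.subtype_injective
  rw [subgroupOf_map_subtype, MonoidHom.map_closure, inf_of_le_left ((closure_le H).mpr hs),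
    Set.image_preimage_eq_of_subset (by simpa using hs)]

/-- If `FSym X ≤ G ≤ Sym X` with `X` infinite, then `FSym X` is characteristic in `G`. -/
theorem fSym_characteristic {X : Type*} [Infinite X]
    (G : Subgroup (Equiv.Perm X)) (hG : FSym X ≤ G) :
    ∀ φ : ↥G ≃* ↥G,
      Subgroup.map (φ : ↥G →* ↥G) ((FSym X).subgroupOf G) = (FSym X).subgroupOf G := by
  classical
  have hS : (FSym X).subgroupOf G = closure {g : G | IsSwapLike g} := by
    rw [fSym_eq_closure_isSwap, subgroupOf_closure]
    · simp only [Set.preimage_ofPred_eq, coe_subtype, isSwapLike_iff_isSwap hG]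
    · exact fun σ hσ => hG (fSym_eq_closure_isSwap X ▸ subset_closure hσ)
  intro φ
  rw [hS, MonoidHom.map_closure, MonoidHom.coe_coe, φ.image_setOf_isSwapLike]
end

section
/- Let X be an infinite set and let G be a subgroup of Sym(X) fully containing FAlt(X). Then the center of G is trivial. -/
/-- A group fully containing `FAlt X`, `X` infinite, is centreless. -/
theorem center_eq_bot_of_fullyContains {X : Type*} [Infinite X]
    (G : Subgroup (Equiv.Perm X)) (hG : FAlt X ≤ G) :
    Subgroup.center ↥G = ⊥ := by
  classical
  rw [Subgroup.eq_bot_iff_forall]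
  intro g hg
  rw [Subgroup.mem_center_iff] at hg
  by_contra hne
  have hne' : (g : Equiv.Perm X) ≠ 1 := by
    intro h
    exact hne (Subtype.ext h)
  obtain ⟨a, ha⟩ : ∃ a, (g : Equiv.Perm X) a ≠ a := by
    by_contra h
    push_neg at h
    exact hne' (Equiv.ext h)
  obtain ⟨b, hb⟩ := Infinite.exists_notMem_finset ({a, (g : Equiv.Perm X) a} : Finset X)
  obtain ⟨c, hc⟩ := Infinite.exists_notMem_finset ({a, (g : Equiv.Perm X) a, b} : Finset X)
  simp only [Finset.mem_insert, Finset.mem_singleton, not_or] at hb hc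
  obtain ⟨hba, hbga⟩ := hb
  obtain ⟨hca, hcga, hcb⟩ := hc
  set σ := Equiv.swap a b * Equiv.swap a c with hσdef
  have hσa : σ a = c := by
    simp [hσdef, Equiv.swap_apply_def, hba, hca, hcb]
  have hσb : σ b = a := by
    simp [hσdef, Equiv.swap_apply_of_ne_of_ne hba (fun h => hcb h.symm)]
  have hσc : σ c = b := by
    simp [hσdef, Equiv.swap_apply_of_ne_of_ne hba (fun h => hcb h.symm)]
  have hsupp : {x | σ x ≠ x} = {a, b, c} := by
    ext x
    simp only [Set.mem_setOf_eq, Set.mem_insert_iff, Set.mem_singleton_iff]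
    constructor
    · intro hx
      by_contra hmem
      push_neg at hmem
      obtain ⟨h1, h2, h3⟩ := hmem
      apply hx
      simp [hσdef, Equiv.swap_apply_of_ne_of_ne, h1, h2, h3]
    · rintro (rfl | rfl | rfl)
      · rw [hσa]; exact hca
      · rw [hσb]; exact fun h => hba h.symm
      · rw [hσc]; exact fun h => hcb h.symm
  have hσFAlt : σ ∈ FAlt X := by
    apply Subgroup.subset_closure
    show {x | σ x ≠ x}.ncard = 3
    rw [hsupp]
    rw [Set.ncard_insert_of_notMem (by simp [hba, hca, Ne.symm]) ((Set.finite_singleton c).insert b),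
      Set.ncard_pair (fun h => hcb h.symm)]
  have hσG : σ ∈ G := hG hσFAlt
  have hcomm := hg ⟨σ, hσG⟩
  have hcomm' : σ * (g : Equiv.Perm X) = (g : Equiv.Perm X) * σ := by
    have := congrArg (Subtype.val) hcomm
    simpa using this
  have := congrFun (congrArg (fun e : Equiv.Perm X => (e : X → X)) hcomm') a
  simp only [Equiv.Perm.mul_apply, hσa] at this
  -- this : σ (g a) = g c
  have hσga : σ ((g : Equiv.Perm X) a) = (g : Equiv.Perm X) a := by
    simp [hσdef]
    rw [Equiv.swap_apply_of_ne_of_ne (fun h => ha h) (fun h => hcga h.symm),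
      Equiv.swap_apply_of_ne_of_ne (fun h => ha h) (fun h => hbga h.symm)]
  rw [hσga] at this
  exact hca ((g : Equiv.Perm X).injective this).symm
end

section
/- Let Y be a set, let X be an infinite subset of Y, and let G be a subgroup of Equiv.Perm Y containing every 3-cycle with support contained in X. Then G has infinitely many conjugacy classes; equivalently, the Reidemeister number of the identity automorphism of G is infinite. -/
open Equiv Set

lemma moved_conj' {Y : Type*} (c f : Equiv.Perm Y) :
    {y | (c * f * c⁻¹) y ≠ y} = c '' {y | f y ≠ y} := by
  ext y
  simp only [Set.mem_setOf_eq, Equiv.Perm.mul_apply, Set.mem_image_equiv]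
  rw [← Equiv.Perm.inv_def]
  constructor
  · intro h h'
    exact h (by rw [h']; simp)
  · intro h h'
    apply h
    have := congrArg (c⁻¹ : Equiv.Perm Y) h'
    simpa using this

lemma moved_mul_disjoint {Y : Type*} (f g : Equiv.Perm Y)
    (h : Disjoint {y | f y ≠ y} {y | g y ≠ y}) :
    {y | (f * g) y ≠ y} = {y | f y ≠ y} ∪ {y | g y ≠ y} := by
  ext y
  simp only [Set.mem_setOf_eq, Equiv.Perm.mul_apply, Set.mem_union]
  by_cases hg : g y = y
  · rw [hg]
    constructor
    · exact Or.inl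
    · rintro (h' | h') <;> [exact h'; exact absurd rfl h']
  · have hgy : g (g y) ≠ g y := fun hc => hg (g.injective hc)
    have : g y ∉ {y | f y ≠ y} := fun hin =>
      (Set.disjoint_left.mp h hin) hgy
    simp only [Set.mem_setOf_eq, not_not] at this
    rw [this]
    exact ⟨fun h' => Or.inr hg, fun _ => hg⟩

lemma moved_triple {Y : Type*} [DecidableEq Y] {a b c : Y} (hab : a ≠ b) (hac : a ≠ c) (hbc : b ≠ c) :
    {y | (Equiv.swap a b * Equiv.swap b c) y ≠ y} = {a, b, c} := by
  ext y
  simp only [Set.mem_setOf_eq, Equiv.Perm.mul_apply, Set.mem_insert_iff, Set.mem_singleton_iff]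
  constructor
  · intro h
    by_contra hcon
    push_neg at hcon
    obtain ⟨h1, h2, h3⟩ := hcon
    rw [Equiv.swap_apply_of_ne_of_ne h2 h3, Equiv.swap_apply_of_ne_of_ne h1 h2] at h
    exact h rfl
  · rintro (rfl | rfl | rfl)
    · rw [Equiv.swap_apply_of_ne_of_ne hab hac, Equiv.swap_apply_left]
      exact hab.symm
    · rw [Equiv.swap_apply_left, Equiv.swap_apply_of_ne_of_ne hac.symm hbc.symm]
      exact hbc.symm
    · rw [Equiv.swap_apply_right, Equiv.swap_apply_right]
      exact hac

/-- If `G ≤ Sym Y` contains every 3-cycle with support in an infinite subset `X ⊆ Y`,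
then `G` has infinitely many conjugacy classes, i.e. `R(id) = ∞`. -/
theorem infinite_conjClasses_of_contains_threeCycles {Y : Type*}
    (X : Set Y) (hX : X.Infinite) (G : Subgroup (Equiv.Perm Y))
    (hG : ∀ σ : Equiv.Perm Y, {y | σ y ≠ y}.ncard = 3 → {y | σ y ≠ y} ⊆ X → σ ∈ G) :
    Infinite (ConjClasses ↥G) ∧ Infinite (Quot (TwistedConj (MulEquiv.refl ↥G))) := by
  classical
  set e : ℕ → Y := fun n => (Set.Infinite.natEmbedding X hX n).1 with he
  have einj : Function.Injective e := fun i j h =>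
    (Set.Infinite.natEmbedding X hX).injective (Subtype.ext h)
  have emem : ∀ n, e n ∈ X := fun n => (Set.Infinite.natEmbedding X hX n).2
  set τ : ℕ → Equiv.Perm Y := fun i =>
    Equiv.swap (e (3*i)) (e (3*i+1)) * Equiv.swap (e (3*i+1)) (e (3*i+2)) with hτ
  have hτmoved : ∀ i, {y | τ i y ≠ y} = {e (3*i), e (3*i+1), e (3*i+2)} := by
    intro i
    exact moved_triple (fun h => by have := einj h; omega)
      (fun h => by have := einj h; omega) (fun h => by have := einj h; omega)
  have hτmem : ∀ i, τ i ∈ G := by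
    intro i
    apply hG
    · rw [hτmoved]
      rw [Set.ncard_insert_of_notMem (by
            simp only [Set.mem_insert_iff, Set.mem_singleton_iff]
            push_neg
            exact ⟨fun h => by have := einj h; omega, fun h => by have := einj h; omega⟩)
          ((Set.finite_singleton _).insert _),
        Set.ncard_pair (fun h => by have := einj h; omega)]
    · rw [hτmoved]
      rintro y (rfl | rfl | rfl) <;> exact emem _
  set σ : ℕ → Equiv.Perm Y := fun n => ((List.range n).map τ).prod with hσ
  have hσmoved : ∀ n, {y | σ n y ≠ y} = e '' Set.Iio (3*n) := by
    intro n
    induction n with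
    | zero =>
      ext y
      simp [hσ]
    | succ n ih =>
      have h1 : σ (n+1) = σ n * τ n := by
        simp [hσ, List.range_succ]
      have himg : {y | τ n y ≠ y} = e '' {3*n, 3*n+1, 3*n+2} := by
        rw [hτmoved]
        simp [Set.image_insert_eq]
      have hdis : Disjoint {y | σ n y ≠ y} {y | τ n y ≠ y} := by
        rw [ih, himg]
        apply Set.disjoint_image_of_injective einj
        simp only [Set.disjoint_left, Set.mem_Iio, Set.mem_insert_iff, Set.mem_singleton_iff]
        omega
      have hidx : Set.Iio (3*n) ∪ ({3*n, 3*n+1, 3*n+2} : Set ℕ) = Set.Iio (3*(n+1)) := by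
        ext k
        simp only [Set.mem_union, Set.mem_Iio, Set.mem_insert_iff, Set.mem_singleton_iff]
        omega
      rw [h1, moved_mul_disjoint _ _ hdis, ih, himg, ← Set.image_union, hidx]
  have hσcard : ∀ n, {y | σ n y ≠ y}.ncard = 3*n := by
    intro n
    rw [hσmoved, Set.ncard_image_of_injective _ einj,
      show Set.Iio (3*n) = ↑(Finset.range (3*n)) from (Finset.coe_range _).symm,
      Set.ncard_coe_finset, Finset.card_range]
  have hσmem : ∀ n, σ n ∈ G := fun n => by
    apply list_prod_mem
    intro x hx
    simp only [List.mem_map, List.mem_range] at hx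
    obtain ⟨i, -, rfl⟩ := hx
    exact hτmem i
  set g : ℕ → G := fun n => ⟨σ n, hσmem n⟩ with hg
  have key : ∀ n m : ℕ, (∃ c : Equiv.Perm Y, c * σ n * c⁻¹ = σ m) → n = m := by
    rintro n m ⟨c, hc⟩
    have h2 := hσcard m
    rw [← hc, moved_conj', Set.ncard_image_of_injective _ c.injective, hσcard] at h2
    omega
  constructor
  · refine Infinite.of_injective (fun n => ConjClasses.mk (g n)) ?_
    intro n m h
    rw [ConjClasses.mk_eq_mk_iff_isConj] at h
    obtain ⟨c, hc⟩ := h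
    apply key n m
    refine ⟨(c : Equiv.Perm Y), ?_⟩
    have hcoe : (c : Equiv.Perm Y) * σ n = σ m * c := congrArg Subtype.val hc
    exact mul_inv_eq_iff_eq_mul.mpr hcoe
  · have hequiv : Equivalence (TwistedConj (MulEquiv.refl ↥G)) := by
      constructor
      · intro a; exact ⟨1, by simp [TwistedConj]⟩
      · rintro a b ⟨x, hx⟩
        refine ⟨x⁻¹, ?_⟩
        simp only [MulEquiv.refl_apply] at hx ⊢
        rw [← hx]; group
      · rintro a b c ⟨x, hx⟩ ⟨y, hy⟩
        refine ⟨x * y, ?_⟩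
        simp only [MulEquiv.refl_apply] at hx hy ⊢
        rw [← hy, ← hx]; group
    refine Infinite.of_injective (fun n => Quot.mk _ (g n)) ?_
    intro n m h
    rw [Quot.eq] at h
    replace h := (Equivalence.eqvGen_iff hequiv).mp h
    obtain ⟨x, hx⟩ := h
    simp only [MulEquiv.refl_apply] at hx
    apply key n m
    refine ⟨(x : Equiv.Perm Y)⁻¹, ?_⟩
    have hcoe : (x : Equiv.Perm Y)⁻¹ * σ n * x = σ m := congrArg Subtype.val hx
    simpa using hcoe
end

section
/- Let Y be a set, let X be an infinite subset of Y, and let G be a subgroup of Equiv.Perm Y containing every 3-cycle with support contained in X. If every automorphism of G is inner, then G has the R_∞ property. -/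
/-- A group has the `R∞` property if every automorphism has infinitely many twisted
conjugacy classes. -/
def RInfinity (G : Type*) [Group G] : Prop :=
  ∀ φ : G ≃* G, Infinite (Quot (TwistedConj φ))

open Equiv Set

lemma twistedConj_equivalence {G : Type*} [Group G] (φ : G ≃* G) :
    Equivalence (TwistedConj φ) := by
  constructor
  · intro a; exact ⟨1, by simp⟩
  · rintro a b ⟨x, hx⟩
    exact ⟨x⁻¹, by rw [← hx]; simp [map_inv, mul_assoc]⟩
  · rintro a b c ⟨x, hx⟩ ⟨z, hz⟩
    refine ⟨x * z, ?_⟩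
    rw [← hz, ← hx]; simp [map_mul, mul_assoc]

lemma twist_to_conj {G : Type*} [Group G] {h x a b : G}
    (hx : (h⁻¹ * x * h)⁻¹ * (h⁻¹ * a) * x = h⁻¹ * b) : x⁻¹ * a * x = b := by
  have h2 : h * ((h⁻¹ * x * h)⁻¹ * (h⁻¹ * a) * x) = h * (h⁻¹ * b) := by rw [hx]
  simpa [mul_inv_rev, mul_assoc] using h2

/-- a 3-cycle `a ↦ b ↦ c ↦ a` -/
noncomputable def tCyc {Y : Type*} (a b c : Y) : Equiv.Perm Y := by
  classical exact Equiv.swap a b * Equiv.swap b c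

section tCyc
variable {Y : Type*} {a b c y : Y}

lemma tCyc_apply_of_ne (hya : y ≠ a) (hyb : y ≠ b) (hyc : y ≠ c) :
    tCyc a b c y = y := by
  classical
  simp [tCyc, Perm.mul_apply, swap_apply_of_ne_of_ne, hya, hyb, hyc]

lemma tCyc_apply_a (hab : a ≠ b) (hac : a ≠ c) : tCyc a b c a = b := by
  classical
  simp [tCyc, Perm.mul_apply, swap_apply_of_ne_of_ne, hab, hac]

lemma tCyc_apply_b (hac : a ≠ c) (hbc : b ≠ c) : tCyc a b c b = c := by
  classical
  simp only [tCyc, Perm.mul_apply, swap_apply_left]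
  rw [swap_apply_of_ne_of_ne (Ne.symm hac) (Ne.symm hbc)]

lemma tCyc_apply_c (hbc : b ≠ c) : tCyc a b c c = a := by
  classical
  simp [tCyc, Perm.mul_apply, swap_apply_of_ne_of_ne, hbc]

lemma tCyc_support (hab : a ≠ b) (hac : a ≠ c) (hbc : b ≠ c) :
    {y | tCyc a b c y ≠ y} = {a, b, c} := by
  ext y
  simp only [Set.mem_setOf_eq, Set.mem_insert_iff, Set.mem_singleton_iff]
  constructor
  · intro hy
    by_contra hcon
    push_neg at hcon
    exact hy (tCyc_apply_of_ne hcon.1 hcon.2.1 hcon.2.2)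
  · rintro (rfl | rfl | rfl)
    · rw [tCyc_apply_a hab hac]; exact Ne.symm hab
    · rw [tCyc_apply_b hac hbc]; exact Ne.symm hbc
    · rw [tCyc_apply_c hbc]; exact hac

end tCyc

/-- product of `k` disjoint 3-cycles along an injection `f` -/
noncomputable def sigK {Y : Type*} (f : ℕ → Y) (k : ℕ) : Equiv.Perm Y :=
  ((List.range k).map (fun i => tCyc (f (3*i)) (f (3*i+1)) (f (3*i+2)))).prod

section sigK
variable {Y : Type*} {f : ℕ → Y}

lemma sigK_succ (k : ℕ) :
    sigK f (k+1) = sigK f k * tCyc (f (3*k)) (f (3*k+1)) (f (3*k+2)) := by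
  simp [sigK, List.range_succ]

variable (hf : Function.Injective f)
include hf

lemma sigK_fix {k : ℕ} {y : Y} (hy : ∀ n, n < 3*k → y ≠ f n) :
    sigK f k y = y := by
  induction k with
  | zero => simp [sigK]
  | succ k ih =>
    rw [sigK_succ, Perm.mul_apply]
    rw [tCyc_apply_of_ne (hy _ (by omega)) (hy _ (by omega)) (hy _ (by omega))]
    exact ih (fun n hn => hy n (by omega))

lemma sigK_moves {k n : ℕ} (hn : n < 3*k) : sigK f k (f n) ≠ f n := by
  have hne : ∀ i j : ℕ, i ≠ j → f i ≠ f j := fun i j hij he => hij (hf he)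
  induction k with
  | zero => omega
  | succ k ih =>
    rw [sigK_succ, Perm.mul_apply]
    by_cases h : n < 3*k
    · rw [tCyc_apply_of_ne (hne _ _ (by omega)) (hne _ _ (by omega)) (hne _ _ (by omega))]
      exact ih h
    · have key : ∃ m, sigK f k (tCyc (f (3*k)) (f (3*k+1)) (f (3*k+2)) (f n)) = f m
          ∧ m ≠ n := by
        rcases (by omega : n = 3*k ∨ n = 3*k+1 ∨ n = 3*k+2) with rfl | rfl | rfl
        · refine ⟨3*k+1, ?_, by omega⟩
          rw [tCyc_apply_a (hne _ _ (by omega)) (hne _ _ (by omega))]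
          exact sigK_fix hf (fun m hm he => absurd (hf he) (by omega))
        · refine ⟨3*k+2, ?_, by omega⟩
          rw [tCyc_apply_b (hne _ _ (by omega)) (hne _ _ (by omega))]
          exact sigK_fix hf (fun m hm he => absurd (hf he) (by omega))
        · refine ⟨3*k, ?_, by omega⟩
          rw [tCyc_apply_c (hne _ _ (by omega))]
          exact sigK_fix hf (fun m hm he => absurd (hf he) (by omega))
      obtain ⟨m, hm, hmn⟩ := key
      rw [hm]
      exact hne _ _ hmn

lemma sigK_support (k : ℕ) :
    {y | sigK f k y ≠ y} = f '' {n | n < 3*k} := by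
  ext y
  simp only [Set.mem_setOf_eq, Set.mem_image]
  constructor
  · intro hy
    by_contra hcon
    push_neg at hcon
    exact hy (sigK_fix hf (fun n hn he => hcon n hn he.symm))
  · rintro ⟨n, hn, rfl⟩
    exact sigK_moves hf hn

lemma sigK_ncard (k : ℕ) : {y | sigK f k y ≠ y}.ncard = 3*k := by
  rw [sigK_support hf, Set.ncard_image_of_injective _ hf]
  have : {n : ℕ | n < 3*k} = ↑(Finset.range (3*k)) := by
    ext n; simp
  rw [this, Set.ncard_coe_finset, Finset.card_range]

end sigK

lemma ncard_support_conj {Y : Type*} (x σ : Equiv.Perm Y) :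
    {y | (x⁻¹ * σ * x) y ≠ y}.ncard = {y | σ y ≠ y}.ncard := by
  have hset : {y | (x⁻¹ * σ * x) y ≠ y} = ⇑x ⁻¹' {y | σ y ≠ y} := by
    ext y
    simp only [Set.mem_preimage, Set.mem_setOf_eq, Perm.mul_apply, Perm.inv_def,
      ne_eq, Equiv.symm_apply_eq]
  have h2 : ⇑x ⁻¹' {y | σ y ≠ y} = ⇑x.symm '' {y | σ y ≠ y} := by
    rw [Equiv.image_eq_preimage_symm, Equiv.symm_symm]
  rw [hset, h2, Set.ncard_image_of_injective _ x.symm.injective]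

/-- If `G ≤ Sym Y` contains every 3-cycle with support in an infinite subset `X ⊆ Y` and
every automorphism of `G` is inner, then `G` has the `R∞` property. -/
theorem rinfinity_of_aut_eq_inn {Y : Type*}
    (X : Set Y) (hX : X.Infinite) (G : Subgroup (Equiv.Perm Y))
    (hG : ∀ σ : Equiv.Perm Y, {y | σ y ≠ y}.ncard = 3 → {y | σ y ≠ y} ⊆ X → σ ∈ G)
    (hinner : ∀ φ : ↥G ≃* ↥G, ∃ h : ↥G, ∀ g : ↥G, φ g = h⁻¹ * g * h) :
    RInfinity ↥G := by
  classical
  intro φ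
  obtain ⟨h, hh⟩ := hinner φ
  set f0 : ℕ ↪ X := Set.Infinite.natEmbedding X hX with hf0
  set f : ℕ → Y := fun n => (f0 n : Y) with hfdef
  have hf : Function.Injective f := fun a b hab =>
    f0.injective (Subtype.ext hab)
  have hfX : ∀ n, f n ∈ X := fun n => (f0 n).2
  have hne : ∀ i j : ℕ, i ≠ j → f i ≠ f j := fun i j hij he => hij (hf he)
  -- each product of 3-cycles is in G
  have hmem : ∀ k, sigK f k ∈ G := by
    intro k
    refine Subgroup.list_prod_mem G ?_
    intro t ht
    simp only [List.mem_map, List.mem_range] at ht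
    obtain ⟨i, _, rfl⟩ := ht
    refine hG _ ?_ ?_
    · rw [tCyc_support (hne _ _ (by omega)) (hne _ _ (by omega)) (hne _ _ (by omega))]
      exact Set.ncard_eq_three.mpr
        ⟨_, _, _, hne _ _ (by omega), hne _ _ (by omega), hne _ _ (by omega), rfl⟩
    · rw [tCyc_support (hne _ _ (by omega)) (hne _ _ (by omega)) (hne _ _ (by omega))]
      rintro y (rfl | rfl | rfl) <;> exact hfX _
  set F : ℕ → Quot (TwistedConj φ) :=
    fun k => Quot.mk _ (h⁻¹ * ⟨sigK f k, hmem k⟩) with hF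
  have hFinj : Function.Injective F := by
    intro k l hkl
    have hq := Quot.eq.mp hkl
    rw [Equivalence.eqvGen_iff (twistedConj_equivalence φ)] at hq
    obtain ⟨x, hx⟩ := hq
    rw [hh x] at hx
    have hx' : x⁻¹ * (⟨sigK f k, hmem k⟩ : ↥G) * x = ⟨sigK f l, hmem l⟩ :=
      twist_to_conj hx
    have hcoe : (x : Equiv.Perm Y)⁻¹ * sigK f k * (x : Equiv.Perm Y) = sigK f l :=
      congrArg Subtype.val hx'
    have h1 := ncard_support_conj (x : Equiv.Perm Y) (sigK f k)
    rw [hcoe, sigK_ncard hf, sigK_ncard hf] at h1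
    omega
  exact Infinite.of_injective F hFinj
end

section
/- For any infinite set X, the full symmetric group Sym(X) = Equiv.Perm X has the R_∞ property. -/
set_option linter.unusedSectionVars false

open Equiv Equiv.Perm

section Swaps
variable {X : Type*} [DecidableEq X]

def IsT (t : Perm X) : Prop := ∃ p q : X, p ≠ q ∧ t = Equiv.swap p q

def QProp (t : Perm X) : Prop :=
  t ≠ 1 ∧ t * t = 1 ∧
    ∀ x : Perm X, ¬ Commute (x * t * x⁻¹) t → ((x * t * x⁻¹) * t) ^ 3 = 1

lemma swap_ne_one {p q : X} (h : p ≠ q) : Equiv.swap p q ≠ 1 := by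
  intro he
  have := congrArg (fun (e : Perm X) => e p) he
  simp at this
  exact h this.symm

lemma commute_swap_of_disjoint {a b c d : X} (hca : c ≠ a) (hcb : c ≠ b)
    (hda : d ≠ a) (hdb : d ≠ b) :
    Commute (Equiv.swap a b) (Equiv.swap c d) := by
  unfold Commute SemiconjBy
  ext z
  simp only [Equiv.Perm.mul_apply, Equiv.swap_apply_def]
  split_ifs <;> simp_all

lemma swap_share_cube {p q r : X} (hq : q ≠ p) (hr : r ≠ p) (hqr : q ≠ r) :
    (Equiv.swap p q * Equiv.swap p r) ^ 3 = 1 := by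
  set u := Equiv.swap p q * Equiv.swap p r with hu
  have h1 : u p = r := by
    simp [hu, Equiv.Perm.mul_apply, Equiv.swap_apply_left,
      Equiv.swap_apply_of_ne_of_ne hr hqr.symm]
  have h2 : u r = q := by
    simp [hu, Equiv.Perm.mul_apply, Equiv.swap_apply_right]
  have h3 : u q = p := by
    simp [hu, Equiv.Perm.mul_apply, Equiv.swap_apply_of_ne_of_ne hq hqr,
      Equiv.swap_apply_right]
  have h4 : ∀ z, z ≠ p → z ≠ q → z ≠ r → u z = z := by
    intro z h5 h6 h7
    simp [hu, Equiv.Perm.mul_apply, Equiv.swap_apply_of_ne_of_ne h5 h7,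
      Equiv.swap_apply_of_ne_of_ne h5 h6]
  ext z
  have : u (u (u z)) = z := by
    by_cases hzp : z = p
    · subst hzp; rw [h1, h2, h3]
    · by_cases hzq : z = q
      · subst hzq; rw [h3, h1, h2]
      · by_cases hzr : z = r
        · subst hzr; rw [h2, h3, h1]
        · rw [h4 z hzp hzq hzr, h4 z hzp hzq hzr, h4 z hzp hzq hzr]
  simpa [pow_succ, Equiv.Perm.mul_apply] using this

lemma QProp_of_isT {t : Perm X} (h : IsT t) : QProp t := by
  obtain ⟨p, q, hpq, rfl⟩ := h
  refine ⟨swap_ne_one hpq, Equiv.swap_mul_self p q, ?_⟩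
  intro x hc
  obtain ⟨a, b, hab, hs⟩ : ∃ a b, a ≠ b ∧ x * Equiv.swap p q * x⁻¹ = Equiv.swap a b :=
    ⟨x p, x q, fun he => hpq (x.injective he), (Equiv.swap_apply_apply x p q).symm⟩
  rw [hs] at hc ⊢
  by_cases hap : a = p
  · subst hap
    have hbq : b ≠ q := fun he => hc (by rw [he])
    exact swap_share_cube hab.symm hpq.symm hbq
  · by_cases haq : a = q
    · subst haq
      have hbp : b ≠ p := fun he => hc (by rw [he, Equiv.swap_comm p a])
      rw [Equiv.swap_comm p a]
      exact swap_share_cube hab.symm hpq hbp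
    · by_cases hbp : b = p
      · subst hbp
        rw [Equiv.swap_comm a b]
        exact swap_share_cube hap hpq.symm haq
      · by_cases hbq : b = q
        · subst hbq
          rw [Equiv.swap_comm a b, Equiv.swap_comm p b]
          exact swap_share_cube haq hpq hap
        · exact absurd
            (commute_swap_of_disjoint (Ne.symm hap) (Ne.symm hbp) (Ne.symm haq) (Ne.symm hbq))
            hc

end Swaps

lemma isT_of_QProp {X : Type*} [DecidableEq X] [Infinite X] {t : Equiv.Perm X}
    (h : QProp t) : IsT t := by
  obtain ⟨hne, hsq, hQ⟩ := h
  have ht2 : ∀ z, t (t z) = z := fun z => by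
    have := Equiv.ext_iff.1 hsq z
    simpa [Equiv.Perm.mul_apply] using this
  by_contra hnt
  have hmove : ∃ p, t p ≠ p := by
    by_contra hfix; push_neg at hfix
    exact hne (Equiv.ext fun z => by simpa using hfix z)
  obtain ⟨a, ha⟩ := hmove
  obtain ⟨b, hb⟩ : ∃ b, t a = b := ⟨_, rfl⟩
  have hab : a ≠ b := fun h => ha (hb.trans h.symm)
  have htb : t b = a := by rw [← hb, ht2]
  have hsecond : ∃ c, c ≠ a ∧ c ≠ b ∧ t c ≠ c := by
    by_contra hco; push_neg at hco
    apply hnt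
    refine ⟨a, b, hab, ?_⟩
    ext z
    by_cases hza : z = a
    · subst hza; rw [Equiv.swap_apply_left, hb]
    · by_cases hzb : z = b
      · subst hzb; rw [Equiv.swap_apply_right, htb]
      · rw [Equiv.swap_apply_of_ne_of_ne hza hzb, hco z hza hzb]
  obtain ⟨c, hca, hcb, hc⟩ := hsecond
  obtain ⟨d, hd⟩ : ∃ d, t c = d := ⟨_, rfl⟩
  have hcd : c ≠ d := fun h => hc (hd.trans h.symm)
  have htd : t d = c := by rw [← hd, ht2]
  have hda : d ≠ a := fun h => hcb (t.injective (hd.trans (h.trans htb.symm)))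
  have hdb : d ≠ b := fun h => hca (t.injective (hd.trans (h.trans hb.symm)))
  by_cases hfp : ∃ e, t e = e
  · -- five-point construction
    obtain ⟨e, hte⟩ := hfp
    have hea : e ≠ a := fun h => ha (by rw [h] at hte; exact hte)
    have heb : e ≠ b := fun h => hab (by rw [h] at hte; rw [← htb, hte])
    have hec : e ≠ c := fun h => hc (by rw [h] at hte; exact hte)
    have hed : e ≠ d := fun h => hcd (by rw [h] at hte; rw [← htd, hte])
    obtain ⟨x, hxdef⟩ : ∃ x : Equiv.Perm X,
        x = Equiv.swap a d * Equiv.swap d e * Equiv.swap e c := ⟨_, rfl⟩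
    have e1 : Equiv.swap e c a = a := Equiv.swap_apply_of_ne_of_ne (Ne.symm hea) (Ne.symm hca)
    have e2 : Equiv.swap d e a = a := Equiv.swap_apply_of_ne_of_ne (Ne.symm hda) (Ne.symm hea)
    have e3 : Equiv.swap a d a = d := Equiv.swap_apply_left a d
    have hxa : x a = d := by simp only [hxdef, Equiv.Perm.mul_apply, e1, e2, e3]
    have e4 : Equiv.swap e c b = b := Equiv.swap_apply_of_ne_of_ne (Ne.symm heb) (Ne.symm hcb)
    have e5 : Equiv.swap d e b = b := Equiv.swap_apply_of_ne_of_ne (Ne.symm hdb) (Ne.symm heb)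
    have e6 : Equiv.swap a d b = b := Equiv.swap_apply_of_ne_of_ne (Ne.symm hab) (Ne.symm hdb)
    have hxb : x b = b := by simp only [hxdef, Equiv.Perm.mul_apply, e4, e5, e6]
    have e7 : Equiv.swap e c c = e := Equiv.swap_apply_right e c
    have e8 : Equiv.swap d e e = d := Equiv.swap_apply_right d e
    have e9 : Equiv.swap a d d = a := Equiv.swap_apply_right a d
    have hxc : x c = a := by simp only [hxdef, Equiv.Perm.mul_apply, e7, e8, e9]
    have e10 : Equiv.swap e c d = d := Equiv.swap_apply_of_ne_of_ne (Ne.symm hed) (Ne.symm hcd)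
    have e11 : Equiv.swap d e d = e := Equiv.swap_apply_left d e
    have e12 : Equiv.swap a d e = e := Equiv.swap_apply_of_ne_of_ne hea hed
    have hxd : x d = e := by simp only [hxdef, Equiv.Perm.mul_apply, e10, e11, e12]
    have e13 : Equiv.swap e c e = c := Equiv.swap_apply_left e c
    have e14 : Equiv.swap d e c = c := Equiv.swap_apply_of_ne_of_ne hcd (Ne.symm hec)
    have e15 : Equiv.swap a d c = c := Equiv.swap_apply_of_ne_of_ne hca hcd
    have hxe : x e = c := by simp only [hxdef, Equiv.Perm.mul_apply, e13, e14, e15]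
    obtain ⟨s, hsdef⟩ : ∃ s, x * t * x⁻¹ = s := ⟨_, rfl⟩
    have hconj : ∀ z, s (x z) = x (t z) := by
      intro z
      rw [← hsdef]
      simp [Equiv.Perm.mul_apply]
    have hsd : s d = b := by have h0 := hconj a; rwa [hxa, hb, hxb] at h0
    have hsb : s b = d := by have h0 := hconj b; rwa [hxb, htb, hxa] at h0
    have hsa : s a = e := by have h0 := hconj c; rwa [hxc, hd, hxd] at h0
    have hsc : s c = c := by have h0 := hconj e; rwa [hxe, hte, hxe] at h0
    have hnc : ¬ Commute s t := by
      intro hcom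
      have h0 := Equiv.ext_iff.1 hcom.eq a
      simp only [Equiv.Perm.mul_apply] at h0
      rw [hb, hsb, hsa, hte] at h0
      exact hed h0.symm
    have hcube := hQ x (by rw [hsdef]; exact hnc)
    rw [hsdef] at hcube
    have h3 := Equiv.ext_iff.1 hcube a
    simp only [pow_succ, pow_zero, one_mul, Equiv.Perm.mul_apply, Equiv.Perm.one_apply] at h3
    rw [hb, hsb, htd, hsc, hd, hsd] at h3
    exact hab h3.symm
  · -- eight-point construction
    push_neg at hfp
    obtain ⟨a3, ha3⟩ := Infinite.exists_notMem_finset ({a, b, c, d} : Finset X)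
    simp only [Finset.mem_insert, Finset.mem_singleton, not_or] at ha3
    obtain ⟨h3a, h3b, h3c, h3d⟩ := ha3
    obtain ⟨b3, hb3⟩ : ∃ b3, t a3 = b3 := ⟨_, rfl⟩
    have k33 : b3 ≠ a3 := fun h => hfp a3 (hb3.trans h)
    have ht3 : t b3 = a3 := by rw [← hb3, ht2]
    have k3a : b3 ≠ a := fun h => h3b (t.injective (hb3.trans (h.trans htb.symm)))
    have k3b : b3 ≠ b := fun h => h3a (t.injective (hb3.trans (h.trans hb.symm)))
    have k3c : b3 ≠ c := fun h => h3d (t.injective (hb3.trans (h.trans htd.symm)))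
    have k3d : b3 ≠ d := fun h => h3c (t.injective (hb3.trans (h.trans hd.symm)))
    obtain ⟨a4, ha4⟩ := Infinite.exists_notMem_finset ({a, b, c, d, a3, b3} : Finset X)
    simp only [Finset.mem_insert, Finset.mem_singleton, not_or] at ha4
    obtain ⟨h4a, h4b, h4c, h4d, h43, h4k3⟩ := ha4
    obtain ⟨b4, hb4⟩ : ∃ b4, t a4 = b4 := ⟨_, rfl⟩
    have k44 : b4 ≠ a4 := fun h => hfp a4 (hb4.trans h)
    have ht4 : t b4 = a4 := by rw [← hb4, ht2]
    have k4a : b4 ≠ a := fun h => h4b (t.injective (hb4.trans (h.trans htb.symm)))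
    have k4b : b4 ≠ b := fun h => h4a (t.injective (hb4.trans (h.trans hb.symm)))
    have k4c : b4 ≠ c := fun h => h4d (t.injective (hb4.trans (h.trans htd.symm)))
    have k4d : b4 ≠ d := fun h => h4c (t.injective (hb4.trans (h.trans hd.symm)))
    have k43 : b4 ≠ a3 := fun h => h4k3 (t.injective (hb4.trans (h.trans ht3.symm)))
    have k4k3 : b4 ≠ b3 := fun h => h43 (t.injective (hb4.trans (h.trans hb3.symm)))
    obtain ⟨x, hxdef⟩ : ∃ x : Equiv.Perm X,
        x = Equiv.swap a b * Equiv.swap b c * Equiv.swap c d * Equiv.swap d a3 *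
          Equiv.swap a3 b3 * Equiv.swap b3 a4 * Equiv.swap a4 b4 := ⟨_, rfl⟩
    have e1 : Equiv.swap a4 b4 a = a := Equiv.swap_apply_of_ne_of_ne (Ne.symm h4a) (Ne.symm k4a)
    have e2 : Equiv.swap b3 a4 a = a := Equiv.swap_apply_of_ne_of_ne (Ne.symm k3a) (Ne.symm h4a)
    have e3 : Equiv.swap a3 b3 a = a := Equiv.swap_apply_of_ne_of_ne (Ne.symm h3a) (Ne.symm k3a)
    have e4 : Equiv.swap d a3 a = a := Equiv.swap_apply_of_ne_of_ne (Ne.symm hda) (Ne.symm h3a)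
    have e5 : Equiv.swap c d a = a := Equiv.swap_apply_of_ne_of_ne (Ne.symm hca) (Ne.symm hda)
    have e6 : Equiv.swap b c a = a := Equiv.swap_apply_of_ne_of_ne hab (Ne.symm hca)
    have e7 : Equiv.swap a b a = b := Equiv.swap_apply_left a b
    have hxa : x a = b := by simp only [hxdef, Equiv.Perm.mul_apply, e1, e2, e3, e4, e5, e6, e7]
    have e8 : Equiv.swap a4 b4 b = b := Equiv.swap_apply_of_ne_of_ne (Ne.symm h4b) (Ne.symm k4b)
    have e9 : Equiv.swap b3 a4 b = b := Equiv.swap_apply_of_ne_of_ne (Ne.symm k3b) (Ne.symm h4b)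
    have e10 : Equiv.swap a3 b3 b = b := Equiv.swap_apply_of_ne_of_ne (Ne.symm h3b) (Ne.symm k3b)
    have e11 : Equiv.swap d a3 b = b := Equiv.swap_apply_of_ne_of_ne (Ne.symm hdb) (Ne.symm h3b)
    have e12 : Equiv.swap c d b = b := Equiv.swap_apply_of_ne_of_ne (Ne.symm hcb) (Ne.symm hdb)
    have e13 : Equiv.swap b c b = c := Equiv.swap_apply_left b c
    have e14 : Equiv.swap a b c = c := Equiv.swap_apply_of_ne_of_ne hca hcb
    have hxb : x b = c := by simp only [hxdef, Equiv.Perm.mul_apply, e8, e9, e10, e11, e12, e13, e14]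
    have e15 : Equiv.swap a4 b4 c = c := Equiv.swap_apply_of_ne_of_ne (Ne.symm h4c) (Ne.symm k4c)
    have e16 : Equiv.swap b3 a4 c = c := Equiv.swap_apply_of_ne_of_ne (Ne.symm k3c) (Ne.symm h4c)
    have e17 : Equiv.swap a3 b3 c = c := Equiv.swap_apply_of_ne_of_ne (Ne.symm h3c) (Ne.symm k3c)
    have e18 : Equiv.swap d a3 c = c := Equiv.swap_apply_of_ne_of_ne hcd (Ne.symm h3c)
    have e19 : Equiv.swap c d c = d := Equiv.swap_apply_left c d
    have e20 : Equiv.swap b c d = d := Equiv.swap_apply_of_ne_of_ne hdb (Ne.symm hcd)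
    have e21 : Equiv.swap a b d = d := Equiv.swap_apply_of_ne_of_ne hda hdb
    have hxc : x c = d := by simp only [hxdef, Equiv.Perm.mul_apply, e15, e16, e17, e18, e19, e20, e21]
    have e22 : Equiv.swap a4 b4 d = d := Equiv.swap_apply_of_ne_of_ne (Ne.symm h4d) (Ne.symm k4d)
    have e23 : Equiv.swap b3 a4 d = d := Equiv.swap_apply_of_ne_of_ne (Ne.symm k3d) (Ne.symm h4d)
    have e24 : Equiv.swap a3 b3 d = d := Equiv.swap_apply_of_ne_of_ne (Ne.symm h3d) (Ne.symm k3d)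
    have e25 : Equiv.swap d a3 d = a3 := Equiv.swap_apply_left d a3
    have e26 : Equiv.swap c d a3 = a3 := Equiv.swap_apply_of_ne_of_ne h3c h3d
    have e27 : Equiv.swap b c a3 = a3 := Equiv.swap_apply_of_ne_of_ne h3b h3c
    have e28 : Equiv.swap a b a3 = a3 := Equiv.swap_apply_of_ne_of_ne h3a h3b
    have hxd : x d = a3 := by simp only [hxdef, Equiv.Perm.mul_apply, e22, e23, e24, e25, e26, e27, e28]
    have e29 : Equiv.swap a4 b4 a3 = a3 := Equiv.swap_apply_of_ne_of_ne (Ne.symm h43) (Ne.symm k43)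
    have e30 : Equiv.swap b3 a4 a3 = a3 := Equiv.swap_apply_of_ne_of_ne (Ne.symm k33) (Ne.symm h43)
    have e31 : Equiv.swap a3 b3 a3 = b3 := Equiv.swap_apply_left a3 b3
    have e32 : Equiv.swap d a3 b3 = b3 := Equiv.swap_apply_of_ne_of_ne k3d k33
    have e33 : Equiv.swap c d b3 = b3 := Equiv.swap_apply_of_ne_of_ne k3c k3d
    have e34 : Equiv.swap b c b3 = b3 := Equiv.swap_apply_of_ne_of_ne k3b k3c
    have e35 : Equiv.swap a b b3 = b3 := Equiv.swap_apply_of_ne_of_ne k3a k3b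
    have hxa3 : x a3 = b3 := by simp only [hxdef, Equiv.Perm.mul_apply, e29, e30, e31, e32, e33, e34, e35]
    have e36 : Equiv.swap a4 b4 b3 = b3 := Equiv.swap_apply_of_ne_of_ne (Ne.symm h4k3) (Ne.symm k4k3)
    have e37 : Equiv.swap b3 a4 b3 = a4 := Equiv.swap_apply_left b3 a4
    have e38 : Equiv.swap a3 b3 a4 = a4 := Equiv.swap_apply_of_ne_of_ne h43 h4k3
    have e39 : Equiv.swap d a3 a4 = a4 := Equiv.swap_apply_of_ne_of_ne h4d h43
    have e40 : Equiv.swap c d a4 = a4 := Equiv.swap_apply_of_ne_of_ne h4c h4d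
    have e41 : Equiv.swap b c a4 = a4 := Equiv.swap_apply_of_ne_of_ne h4b h4c
    have e42 : Equiv.swap a b a4 = a4 := Equiv.swap_apply_of_ne_of_ne h4a h4b
    have hxb3 : x b3 = a4 := by simp only [hxdef, Equiv.Perm.mul_apply, e36, e37, e38, e39, e40, e41, e42]
    have e43 : Equiv.swap a4 b4 a4 = b4 := Equiv.swap_apply_left a4 b4
    have e44 : Equiv.swap b3 a4 b4 = b4 := Equiv.swap_apply_of_ne_of_ne k4k3 k44
    have e45 : Equiv.swap a3 b3 b4 = b4 := Equiv.swap_apply_of_ne_of_ne k43 k4k3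
    have e46 : Equiv.swap d a3 b4 = b4 := Equiv.swap_apply_of_ne_of_ne k4d k43
    have e47 : Equiv.swap c d b4 = b4 := Equiv.swap_apply_of_ne_of_ne k4c k4d
    have e48 : Equiv.swap b c b4 = b4 := Equiv.swap_apply_of_ne_of_ne k4b k4c
    have e49 : Equiv.swap a b b4 = b4 := Equiv.swap_apply_of_ne_of_ne k4a k4b
    have hxa4 : x a4 = b4 := by simp only [hxdef, Equiv.Perm.mul_apply, e43, e44, e45, e46, e47, e48, e49]
    have e50 : Equiv.swap a4 b4 b4 = a4 := Equiv.swap_apply_right a4 b4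
    have e51 : Equiv.swap b3 a4 a4 = b3 := Equiv.swap_apply_right b3 a4
    have e52 : Equiv.swap a3 b3 b3 = a3 := Equiv.swap_apply_right a3 b3
    have e53 : Equiv.swap d a3 a3 = d := Equiv.swap_apply_right d a3
    have e54 : Equiv.swap c d d = c := Equiv.swap_apply_right c d
    have e55 : Equiv.swap b c c = b := Equiv.swap_apply_right b c
    have e56 : Equiv.swap a b b = a := Equiv.swap_apply_right a b
    have hxb4 : x b4 = a := by simp only [hxdef, Equiv.Perm.mul_apply, e50, e51, e52, e53, e54, e55, e56]
    obtain ⟨s, hsdef⟩ : ∃ s, x * t * x⁻¹ = s := ⟨_, rfl⟩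
    have hconj : ∀ z, s (x z) = x (t z) := by
      intro z
      rw [← hsdef]
      simp [Equiv.Perm.mul_apply]
    have hsb : s b = c := by have h0 := hconj a; rwa [hxa, hb, hxb] at h0
    have hsd : s d = a3 := by have h0 := hconj c; rwa [hxc, hd, hxd] at h0
    have hsb3 : s b3 = a4 := by have h0 := hconj a3; rwa [hxa3, hb3, hxb3] at h0
    have hsa : s a = b4 := by have h0 := hconj b4; rwa [hxb4, ht4, hxa4] at h0
    have hnc : ¬ Commute s t := by
      intro hcom
      have h0 := Equiv.ext_iff.1 hcom.eq a
      simp only [Equiv.Perm.mul_apply] at h0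
      rw [hb, hsb, hsa, ht4] at h0
      exact h4c h0.symm
    have hcube := hQ x (by rw [hsdef]; exact hnc)
    rw [hsdef] at hcube
    have h3 := Equiv.ext_iff.1 hcube a
    simp only [pow_succ, pow_zero, one_mul, Equiv.Perm.mul_apply, Equiv.Perm.one_apply] at h3
    rw [hb, hsb, hd, hsd, hb3, hsb3] at h3
    exact h4a h3

section Transfer
variable {X : Type*} [DecidableEq X]

lemma moves_iff {p q z : X} (h : p ≠ q) :
    Equiv.swap p q z ≠ z ↔ z = p ∨ z = q := by
  rw [Equiv.swap_apply_ne_self_iff]; tauto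

lemma IsT.eq_swap_of_moves {t : Perm X} (h : IsT t) {p q : X} (hpq : p ≠ q)
    (hp : t p ≠ p) (hq : t q ≠ q) : t = Equiv.swap p q := by
  obtain ⟨a, b, hab, rfl⟩ := h
  rw [moves_iff hab] at hp hq
  rcases hp with rfl | rfl <;> rcases hq with rfl | rfl
  · exact absurd rfl hpq
  · rfl
  · exact Equiv.swap_comm _ _
  · exact absurd rfl hpq

lemma IsT.eq_swap_apply {t : Perm X} (h : IsT t) {p : X} (hp : t p ≠ p) :
    t = Equiv.swap p (t p) := by
  obtain ⟨a, b, hab, rfl⟩ := h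
  rcases (moves_iff hab).1 hp with rfl | rfl
  · rw [Equiv.swap_apply_left]
  · rw [Equiv.swap_apply_right, Equiv.swap_comm]

lemma swap_noncommute {x y z : X} (hxy : x ≠ y) (hxz : x ≠ z) (hyz : y ≠ z) :
    ¬ Commute (Equiv.swap x y) (Equiv.swap x z) := by
  intro h
  have h0 := Equiv.ext_iff.1 h.eq z
  simp only [Equiv.Perm.mul_apply] at h0
  rw [Equiv.swap_apply_right, Equiv.swap_apply_left,
    Equiv.swap_apply_of_ne_of_ne (Ne.symm hxz) (Ne.symm hyz), Equiv.swap_apply_right] at h0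
  exact hxy h0.symm

lemma shared_point {u v : Perm X} (hu : IsT u) (hv : IsT v) (h : ¬ Commute u v) :
    ∃ p, u p ≠ p ∧ v p ≠ p := by
  by_contra hno; push_neg at hno
  obtain ⟨p, q, hpq, rfl⟩ := hu
  obtain ⟨r, s, hrs, rfl⟩ := hv
  have hr : Equiv.swap p q r = r := by
    by_contra hmr
    exact (by rw [Equiv.swap_apply_left]; exact hrs.symm : Equiv.swap r s r ≠ r) (hno r hmr)
  have hs : Equiv.swap p q s = s := by
    by_contra hms
    exact (by rw [Equiv.swap_apply_right]; exact hrs : Equiv.swap r s s ≠ s) (hno s hms)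
  have hrp : r ≠ p := fun he => by rw [he, Equiv.swap_apply_left] at hr; exact hpq hr.symm
  have hrq : r ≠ q := fun he => by rw [he, Equiv.swap_apply_right] at hr; exact hpq hr
  have hsp : s ≠ p := fun he => by rw [he, Equiv.swap_apply_left] at hs; exact hpq hs.symm
  have hsq : s ≠ q := fun he => by rw [he, Equiv.swap_apply_right] at hs; exact hpq hs
  exact h (commute_swap_of_disjoint hrp hrq hsp hsq)

variable (φ : Perm X ≃* Perm X)

lemma QProp_map {t : Perm X} (h : QProp t) : QProp (φ t) := by
  obtain ⟨h1, h2, h3⟩ := h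
  refine ⟨fun he => h1 (by simpa using φ.injective (he.trans (map_one φ).symm)), ?_, ?_⟩
  · rw [← map_mul, h2, map_one]
  · intro y hc
    obtain ⟨x, rfl⟩ : ∃ x, y = φ x := ⟨φ.symm y, (φ.apply_symm_apply y).symm⟩
    have e1 : φ x * φ t * (φ x)⁻¹ = φ (x * t * x⁻¹) := by rw [← map_inv, ← map_mul, ← map_mul]
    rw [e1] at hc ⊢
    have hnc : ¬ Commute (x * t * x⁻¹) t := by
      intro hco
      exact hc (by unfold Commute SemiconjBy at hco ⊢; rw [← map_mul, hco, map_mul])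
    rw [← map_mul, ← map_pow, h3 x hnc, map_one]

lemma isT_map [Infinite X] {t : Perm X} (h : IsT t) : IsT (φ t) :=
  isT_of_QProp (QProp_map φ (QProp_of_isT h))

lemma noncommute_map {u v : Perm X} (h : ¬ Commute u v) : ¬ Commute (φ u) (φ v) := by
  intro hc
  exact h (by unfold Commute SemiconjBy at hc ⊢; exact φ.injective (by rw [map_mul, map_mul, hc]))

end Transfer

section Sigma
variable {X : Type*} [DecidableEq X] [Infinite X]

lemma moves_other {u v : Perm X} (hu : IsT u) (hv : IsT v) (hnc : ¬ Commute u v)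
    {p : X} (hup : u p ≠ p) (hvp : v p = p) : v (u p) ≠ u p := by
  obtain ⟨w, hw1, hw2⟩ := shared_point hu hv hnc
  have hueq := hu.eq_swap_apply hup
  rw [hueq] at hw1
  rcases (moves_iff (Ne.symm hup)).1 hw1 with rfl | rfl
  · exact absurd hvp hw2
  · exact hw2

variable (φ : Perm X ≃* Perm X)

/-- images under φ of all transpositions through `x` move a common point. -/
lemma star_point (x : X) : ∃ p, ∀ y, y ≠ x → φ (Equiv.swap x y) p ≠ p := by
  obtain ⟨y0, hy0⟩ := Infinite.exists_notMem_finset ({x} : Finset X)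
  simp only [Finset.mem_singleton] at hy0
  obtain ⟨z0, hz0⟩ := Infinite.exists_notMem_finset ({x, y0} : Finset X)
  simp only [Finset.mem_insert, Finset.mem_singleton, not_or] at hz0
  obtain ⟨hz0x, hz0y0⟩ := hz0
  have hT : ∀ y, y ≠ x → IsT (φ (Equiv.swap x y)) := fun y hy =>
    isT_map φ ⟨x, y, Ne.symm hy, rfl⟩
  have hu1 := hT y0 hy0
  have hu2 := hT z0 hz0x
  have hnc12 : ¬ Commute (φ (Equiv.swap x y0)) (φ (Equiv.swap x z0)) :=
    noncommute_map φ (swap_noncommute (Ne.symm hy0) (Ne.symm hz0x) (Ne.symm hz0y0))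
  obtain ⟨p, hp1, hp2⟩ := shared_point hu1 hu2 hnc12
  refine ⟨p, ?_⟩
  intro y hyx
  by_cases hyy0 : y = y0
  · subst hyy0; exact hp1
  by_cases hyz0 : y = z0
  · subst hyz0; exact hp2
  by_contra hp3'
  have hu3 := hT y hyx
  have hnc13 : ¬ Commute (φ (Equiv.swap x y0)) (φ (Equiv.swap x y)) :=
    noncommute_map φ (swap_noncommute (Ne.symm hy0) (Ne.symm hyx) (fun h => hyy0 h.symm))
  have hnc23 : ¬ Commute (φ (Equiv.swap x z0)) (φ (Equiv.swap x y)) :=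
    noncommute_map φ (swap_noncommute (Ne.symm hz0x) (Ne.symm hyx) (fun h => hyz0 h.symm))
  have hq : φ (Equiv.swap x y0) = Equiv.swap p (φ (Equiv.swap x y0) p) := hu1.eq_swap_apply hp1
  have hn : φ (Equiv.swap x z0) = Equiv.swap p (φ (Equiv.swap x z0) p) := hu2.eq_swap_apply hp2
  have hqn : φ (Equiv.swap x y0) p ≠ φ (Equiv.swap x z0) p := by
    intro h
    exact hnc12 (by rw [hq, hn, ← h])
  have hm1 := moves_other hu1 hu3 hnc13 hp1 hp3'
  have hm2 := moves_other hu2 hu3 hnc23 hp2 hp3'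
  have hu3eq : φ (Equiv.swap x y) =
      Equiv.swap (φ (Equiv.swap x y0) p) (φ (Equiv.swap x z0) p) :=
    hu3.eq_swap_of_moves hqn hm1 hm2
  -- a fourth transposition through x
  obtain ⟨v, hv⟩ := Infinite.exists_notMem_finset ({x, y0, z0, y} : Finset X)
  simp only [Finset.mem_insert, Finset.mem_singleton, not_or] at hv
  obtain ⟨hvx, hvy0, hvz0, hvy⟩ := hv
  have hu4 := hT v hvx
  have hnc14 : ¬ Commute (φ (Equiv.swap x y0)) (φ (Equiv.swap x v)) :=
    noncommute_map φ (swap_noncommute (Ne.symm hy0) (Ne.symm hvx) (fun h => hvy0 h.symm))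
  have hnc24 : ¬ Commute (φ (Equiv.swap x z0)) (φ (Equiv.swap x v)) :=
    noncommute_map φ (swap_noncommute (Ne.symm hz0x) (Ne.symm hvx) (fun h => hvz0 h.symm))
  have hnc34 : ¬ Commute (φ (Equiv.swap x y)) (φ (Equiv.swap x v)) :=
    noncommute_map φ (swap_noncommute (Ne.symm hyx) (Ne.symm hvx) (fun h => hvy h.symm))
  by_cases hm : φ (Equiv.swap x v) p = p
  · have hm1' := moves_other hu1 hu4 hnc14 hp1 hm
    have hm2' := moves_other hu2 hu4 hnc24 hp2 hm
    have : φ (Equiv.swap x v) =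
        Equiv.swap (φ (Equiv.swap x y0) p) (φ (Equiv.swap x z0) p) :=
      hu4.eq_swap_of_moves hqn hm1' hm2'
    exact hnc34 (by rw [hu3eq, this])
  · obtain ⟨w, hw3, hw4⟩ := shared_point hu3 hu4 hnc34
    rw [hu3eq] at hw3
    rcases (moves_iff hqn).1 hw3 with rfl | rfl
    · have : φ (Equiv.swap x v) = Equiv.swap p (φ (Equiv.swap x y0) p) :=
        hu4.eq_swap_of_moves (Ne.symm hp1) hm hw4
      exact hnc14 (by rw [hq, this])
    · have : φ (Equiv.swap x v) = Equiv.swap p (φ (Equiv.swap x z0) p) :=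
        hu4.eq_swap_of_moves (Ne.symm hp2) hm hw4
      exact hnc24 (by rw [hn, this])

end Sigma

section Inner
variable {X : Type*} [DecidableEq X] [Infinite X]

lemma three_points (x : X) : ∃ y z : X, y ≠ x ∧ z ≠ x ∧ z ≠ y := by
  obtain ⟨y, hy⟩ := Infinite.exists_notMem_finset ({x} : Finset X)
  simp only [Finset.mem_singleton] at hy
  obtain ⟨z, hz⟩ := Infinite.exists_notMem_finset ({x, y} : Finset X)
  simp only [Finset.mem_insert, Finset.mem_singleton, not_or] at hz
  exact ⟨y, z, hy, hz.1, hz.2⟩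

lemma conj_fix {u1 u2 : Perm X} {p α β : X} (h1 : u1 = Equiv.swap p α)
    (h2 : u2 = Equiv.swap p β) (hαp : α ≠ p) (hαβ : α ≠ β) :
    (u1 * u2 * u1⁻¹) p = p := by
  subst h1; subst h2
  simp only [Equiv.Perm.mul_apply, Equiv.swap_inv]
  rw [Equiv.swap_apply_left, Equiv.swap_apply_of_ne_of_ne hαp hαβ, Equiv.swap_apply_right]

lemma exists_pointmap (φ : Perm X ≃* Perm X) :
    ∃ σ : X → X, (∀ x y, x ≠ y → φ (Equiv.swap x y) = Equiv.swap (σ x) (σ y)) ∧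
      Function.Injective σ := by
  choose σ hσ using fun x => star_point φ x
  have hinj : ∀ x y, x ≠ y → σ x ≠ σ y := by
    intro x y hxy heq
    obtain ⟨z, hzx, hzy⟩ : ∃ z : X, z ≠ x ∧ z ≠ y := by
      obtain ⟨z, hz⟩ := Infinite.exists_notMem_finset ({x, y} : Finset X)
      simp only [Finset.mem_insert, Finset.mem_singleton, not_or] at hz
      exact ⟨z, hz.1, hz.2⟩
    have A1 : φ (Equiv.swap x y) (σ x) ≠ σ x := hσ x y (Ne.symm hxy)
    have A2 : φ (Equiv.swap x z) (σ x) ≠ σ x := hσ x z hzx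
    have A3 : φ (Equiv.swap y z) (σ y) ≠ σ y := hσ y z hzy
    have hu1 : IsT (φ (Equiv.swap x y)) := isT_map φ ⟨x, y, hxy, rfl⟩
    have hu2 : IsT (φ (Equiv.swap x z)) := isT_map φ ⟨x, z, Ne.symm hzx, rfl⟩
    have h1 := hu1.eq_swap_apply A1
    have h2 := hu2.eq_swap_apply A2
    have h12 : φ (Equiv.swap x y) (σ x) ≠ φ (Equiv.swap x z) (σ x) := by
      intro h
      exact noncommute_map φ
        (swap_noncommute hxy (Ne.symm hzx) (Ne.symm hzy)) (by rw [h1, h2, ← h])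
    have key : Equiv.swap y z =
        Equiv.swap x y * Equiv.swap x z * (Equiv.swap x y)⁻¹ := by
      have hk := Equiv.swap_apply_apply (Equiv.swap x y) x z
      rwa [Equiv.swap_apply_left, Equiv.swap_apply_of_ne_of_ne hzx hzy] at hk
    apply A3
    rw [← heq, key, map_mul, map_mul, map_inv]
    exact conj_fix h1 h2 A1 h12
  refine ⟨σ, ?_, fun a b hab => by_contra fun hne => hinj a b hne hab⟩
  intro x y hxy
  refine (isT_map φ ⟨x, y, hxy, rfl⟩).eq_swap_of_moves (hinj x y hxy)
    (hσ x y (Ne.symm hxy)) ?_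
  rw [Equiv.swap_comm]
  exact hσ y x hxy

lemma comp_eq_id {σ τ : X → X} (hτσinj : Function.Injective (fun x => τ (σ x)))
    (hE : ∀ x w, w ≠ x → Equiv.swap x w = Equiv.swap (τ (σ x)) (τ (σ w))) :
    ∀ x, τ (σ x) = x := by
  intro x
  obtain ⟨y, z, hyx, hzx, hzy⟩ := three_points x
  have hxy := hE x y hyx
  have hxz := hE x z hzx
  have hne1 : τ (σ x) ≠ τ (σ y) := fun h => hyx (hτσinj h).symm
  have hne2 : τ (σ x) ≠ τ (σ z) := fun h => hzx (hτσinj h).symm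
  have m1 : Equiv.swap x y (τ (σ x)) ≠ τ (σ x) := by
    rw [hxy, Equiv.swap_apply_left]
    exact Ne.symm hne1
  have m2 : Equiv.swap x z (τ (σ x)) ≠ τ (σ x) := by
    rw [hxz, Equiv.swap_apply_left]
    exact Ne.symm hne2
  rcases (moves_iff (Ne.symm hyx)).1 m1 with h | h
  · exact h
  · rcases (moves_iff (Ne.symm hzx)).1 m2 with h' | h'
    · exact h'
    · exact absurd (h.symm.trans h') hzy.symm

lemma exists_inner (φ : Perm X ≃* Perm X) :
    ∃ σ : Perm X, ∀ g : Perm X, φ g = σ * g * σ⁻¹ := by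
  obtain ⟨σ, hσC, hσinj⟩ := exists_pointmap φ
  obtain ⟨τ, hτC, hτinj⟩ := exists_pointmap φ.symm
  have hτσ : ∀ x, τ (σ x) = x := by
    refine comp_eq_id (hτinj.comp hσinj) ?_
    intro x w hw
    have h0 := hτC (σ x) (σ w) (fun h => hw (hσinj h).symm)
    rw [← hσC x w (Ne.symm hw), φ.symm_apply_apply] at h0
    exact h0
  have hστ : ∀ p, σ (τ p) = p := by
    refine comp_eq_id (hσinj.comp hτinj) ?_
    intro p w hw
    have h0 := hσC (τ p) (τ w) (fun h => hw (hτinj h).symm)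
    rw [← hτC p w (Ne.symm hw), φ.apply_symm_apply] at h0
    exact h0
  have key : ∀ g x, φ g (σ x) = σ (g x) := by
    intro g x
    obtain ⟨y, z, hyx, hzx, hzy⟩ := three_points x
    have hswap : ∀ w, w ≠ x →
        Equiv.swap (σ (g x)) (σ (g w)) = Equiv.swap (φ g (σ x)) (φ g (σ w)) := by
      intro w hw
      have e1 : φ (g * Equiv.swap x w * g⁻¹) =
          φ g * Equiv.swap (σ x) (σ w) * (φ g)⁻¹ := by
        rw [map_mul, map_mul, map_inv, hσC x w (Ne.symm hw)]
      rw [← Equiv.swap_apply_apply g x w, hσC (g x) (g w)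
        (fun h => hw (g.injective h).symm), ← Equiv.swap_apply_apply (φ g) (σ x) (σ w)] at e1
      exact e1
    have hy := hswap y hyx
    have hz := hswap z hzx
    have hgne : ∀ w, w ≠ x → σ (g x) ≠ σ (g w) :=
      fun w hw h => hw (g.injective (hσinj h)).symm
    have hAne : ∀ w, w ≠ x → φ g (σ x) ≠ φ g (σ w) :=
      fun w hw h => hw (hσinj ((φ g).injective h)).symm
    have m1 : Equiv.swap (σ (g x)) (σ (g y)) (φ g (σ x)) ≠ φ g (σ x) := by
      rw [hy, Equiv.swap_apply_left]
      exact Ne.symm (hAne y hyx)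
    have m2 : Equiv.swap (σ (g x)) (σ (g z)) (φ g (σ x)) ≠ φ g (σ x) := by
      rw [hz, Equiv.swap_apply_left]
      exact Ne.symm (hAne z hzx)
    rcases (moves_iff (hgne y hyx)).1 m1 with h | h
    · exact h
    · rcases (moves_iff (hgne z hzx)).1 m2 with h' | h'
      · exact h'
      · exact absurd (hσinj (h.symm.trans h'))
          (fun hE => hzy (g.injective hE).symm)
  refine ⟨⟨σ, τ, hτσ, hστ⟩, ?_⟩
  intro g
  ext w
  have h0 := key g (τ w)
  rw [hστ w] at h0
  simpa [Equiv.Perm.mul_apply] using h0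

end Inner

section Final

lemma exists_orderOf_perm {X : Type*} [Infinite X] (n : ℕ) :
    ∃ g : Perm X, orderOf g = n + 2 := by
  let e : Fin (n + 2) ↪ X := (Fin.valEmbedding).trans (Infinite.natEmbedding X)
  refine ⟨(finRotate (n + 2)).viaEmbedding e, ?_⟩
  have h1 : orderOf ((finRotate (n + 2)).viaEmbedding e) = orderOf (finRotate (n + 2)) := by
    rw [← Equiv.Perm.viaEmbeddingHom_apply]
    exact orderOf_injective _ (Equiv.Perm.viaEmbeddingHom_injective e) _
  rw [h1, ← Equiv.Perm.lcm_cycleType, cycleType_finRotate,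
    Multiset.lcm_singleton, normalize_eq]

lemma orderOf_conj_eq {G : Type*} [Group G] (w c : G) :
    orderOf (c⁻¹ * w * c) = orderOf w := by
  have h : (MulAut.conj c⁻¹ : G ≃* G) w = c⁻¹ * w * c := by
    simp [MulAut.conj_apply]
  rw [← h]
  exact orderOf_injective ((MulAut.conj c⁻¹ : G ≃* G) : G →* G)
    (MulEquiv.injective _) w

/-- For any infinite set `X`, the full symmetric group `Sym X` has the `R∞` property. -/
theorem rinfinity_perm {X : Type*} [Infinite X] : RInfinity (Equiv.Perm X) := by
  intro φ
  letI := Classical.decEq X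
  obtain ⟨σ, hσ⟩ := exists_inner φ
  have hwd : ∀ a b, TwistedConj φ a b → orderOf (σ⁻¹ * a) = orderOf (σ⁻¹ * b) := by
    rintro a b ⟨x, rfl⟩
    rw [hσ x]
    have : σ⁻¹ * ((σ * x * σ⁻¹)⁻¹ * a * x) = x⁻¹ * (σ⁻¹ * a) * x := by
      group
    rw [this, orderOf_conj_eq]
  let F : Quot (TwistedConj φ) → ℕ := Quot.lift (fun a => orderOf (σ⁻¹ * a)) hwd
  have horder := fun n => exists_orderOf_perm (X := X) n
  refine Infinite.of_injective
    (fun n : ℕ => Quot.mk (TwistedConj φ) (σ * Classical.choose (horder n))) ?_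
  intro m n h
  have hm := Classical.choose_spec (horder m)
  have hn := Classical.choose_spec (horder n)
  have hF : orderOf (σ⁻¹ * (σ * Classical.choose (horder m))) =
      orderOf (σ⁻¹ * (σ * Classical.choose (horder n))) := congrArg F h
  rw [inv_mul_cancel_left, inv_mul_cancel_left, hm, hn] at hF
  omega

end Final
end

section
/- Let X be a set and let G be a torsion subgroup of Equiv.Perm X (every element of G has finite order). Then the subgroup of Equiv.Perm X generated by G together with FAlt(X) is also torsion. -/
open MulAction Pointwise

theorem IsMulTorsion.sup_of_normal {G : Type*} [Group G] {H N : Subgroup G} [N.Normal]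
    (hH : IsMulTorsion H) (hN : IsMulTorsion N) : IsMulTorsion ↥(H ⊔ N) := by
  rintro ⟨x, hx⟩
  rw [← SetLike.mem_coe, Subgroup.mul_normal] at hx
  obtain ⟨h, hh, n, hn, rfl⟩ := hx
  obtain ⟨k, hk, hhk⟩ := (Submonoid.isOfFinOrder_coe.2 (hH ⟨h, hh⟩)).exists_pow_eq_one
  -- `h * n` and `h` agree modulo `N`
  have hpow : (h * n) ^ k ∈ N := by
    rw [← QuotientGroup.eq_one_iff, QuotientGroup.mk_pow, QuotientGroup.mk_mul,
      (QuotientGroup.eq_one_iff n).2 hn, mul_one, ← QuotientGroup.mk_pow, hhk, QuotientGroup.mk_one]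
  exact Submonoid.isOfFinOrder_coe.1 <|
    (Submonoid.isOfFinOrder_coe.2 (hN ⟨_, hpow⟩)).of_pow hk.ne'

namespace Equiv.Perm

variable {X : Type*}

theorem compl_fixedBy_eq_setOf_ne (σ : Perm X) : (fixedBy X σ)ᶜ = {x | σ x ≠ x} := rfl

theorem isOfFinOrder_of_finite_compl_fixedBy {σ : Perm X} (hσ : (fixedBy X σ)ᶜ.Finite) :
    IsOfFinOrder σ := by
  classical
  have : Finite ↥(fixedBy X σ)ᶜ := hσ
  rw [← ofSubtype_subtypePerm (p := (· ∈ (fixedBy X σ)ᶜ))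
    (fun x => by simp [σ.injective.eq_iff]) fun _ hx => hx]
  exact ofSubtype.isOfFinOrder (isOfFinOrder_of_finite _)

end Equiv.Perm

open Equiv.Perm

instance FAlt.normal (X : Type*) : (FAlt X).Normal := by
  rw [← Subgroup.normalizer_eq_top_iff, eq_top_iff]
  refine le_trans ?_ (Subgroup.normalizer_le_normalizer_closure _)
  refine Subgroup.le_set_normalizer_iff.2 fun g _ σ hσ => ?_
  simp only [Set.mem_ofPred_eq, ← compl_fixedBy_eq_setOf_ne, ← smul_fixedBy,
    ← Set.smul_set_compl, Set.ncard_smul_set] at hσ ⊢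
  exact hσ

theorem isMulTorsion_fAlt (X : Type*) : IsMulTorsion (FAlt X) := by
  rintro ⟨σ, hσ⟩
  refine Submonoid.isOfFinOrder_coe.1 <| isOfFinOrder_of_finite_compl_fixedBy ?_
  refine finite_compl_fixedBy_closure_iff.2 (fun τ hτ => Set.finite_of_ncard_ne_zero ?_) σ hσ
  rw [compl_fixedBy_eq_setOf_ne, hτ]
  norm_num

/-- If `G ≤ Sym X` is torsion, then `⟨G, FAlt X⟩` is torsion. -/
theorem isTorsion_sup_fAlt {X : Type*} (G : Subgroup (Equiv.Perm X))
    (htor : Monoid.IsTorsion ↥G) :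
    Monoid.IsTorsion ↥(G ⊔ FAlt X) :=
  htor.sup_of_normal (isMulTorsion_fAlt X)
end

section
/- Let X be a set and let G be a subgroup of Equiv.Perm X such that every element of G has only finite orbits. Then every element of the subgroup of Equiv.Perm X generated by G together with FAlt(X) also has only finite orbits. -/
/-!
Finitely supported permutations form a normal subgroup containing `FAlt X`, so every element of
`G ⊔ FAlt X` is a product `g * f` with `g ∈ G` and `f` finitely supported. The union `T` of the
`g`-orbits through the support of `f` is finite and invariant under both `g` and `f`. Hence the
`g * f`-orbit of a point of `T` stays in `T`, while off `T` the permutation `g * f` acts as `g`.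
-/

open Pointwise

namespace MulAction

variable (G α : Type*) [Group G] [MulAction G α]

def finiteMovedBy : Subgroup G where
  carrier := {g | (fixedBy α g)ᶜ.Finite}
  one_mem' := by simp
  mul_mem' {a b} ha hb := (ha.union hb).subset <| by
    rw [← Set.compl_inter]
    exact Set.compl_subset_compl.mpr (fixedBy_mul α a b)
  inv_mem' {a} ha := by rwa [Set.mem_ofPred_eq, fixedBy_inv]

variable {G α}

theorem mem_finiteMovedBy {g : G} : g ∈ finiteMovedBy G α ↔ (fixedBy α g)ᶜ.Finite :=
  Iff.rfl

instance finiteMovedBy_normal : (finiteMovedBy G α).Normal where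
  conj_mem n hn g := by
    rw [mem_finiteMovedBy, ← smul_fixedBy, ← Set.smul_set_compl]
    exact hn.smul_set

end MulAction

namespace Equiv.Perm

open MulAction

variable {X : Type*}

def HasFiniteOrbits (g : Perm X) : Prop :=
  ∀ x : X, (Set.range fun d : ℤ => (g ^ d) x).Finite

theorem apply_mem_range_zpow_apply_iff (g : Perm X) (x y : X) :
    g y ∈ Set.range (fun d : ℤ => (g ^ d) x) ↔
      y ∈ Set.range (fun d : ℤ => (g ^ d) x) := by
  simp only [Set.mem_range]
  constructor
  · rintro ⟨d, hd⟩
    refine ⟨d - 1, ?_⟩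
    rw [sub_eq_neg_add, zpow_add, zpow_neg_one, mul_apply, hd, inv_eq_iff_eq]
  · rintro ⟨d, rfl⟩
    exact ⟨1 + d, by rw [zpow_add, zpow_one, mul_apply]⟩

theorem zpow_apply_eq_of_eqOn {σ τ : Perm X} {s : Set X} (hσ : ∀ x, σ x ∈ s ↔ x ∈ s)
    (hτ : ∀ x, τ x ∈ s ↔ x ∈ s) (h : Set.EqOn σ τ s) (d : ℤ) {x : X} (hx : x ∈ s) :
    (σ ^ d) x = (τ ^ d) x := by
  have hστ : σ.subtypePerm hσ = τ.subtypePerm hτ := ext fun y => Subtype.ext (h y.2)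
  simpa using congr_arg (fun π => ((π ^ d) ⟨x, hx⟩ : X)) hστ

theorem HasFiniteOrbits.mul_of_mem_finiteMovedBy {g f : Perm X} (hg : g.HasFiniteOrbits)
    (hf : f ∈ finiteMovedBy (Perm X) X) : (g * f).HasFiniteOrbits := by
  intro x
  set T := ⋃ s ∈ (fixedBy X f)ᶜ, Set.range fun d : ℤ => (g ^ d) s
  have hT : T.Finite := hf.biUnion fun s _ => hg s
  have hgT : T ∈ fixedBy (Set X) g := by
    rw [set_mem_fixedBy_iff]
    intro y
    simp only [T, Set.mem_iUnion, Perm.smul_def, apply_mem_range_zpow_apply_iff]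
  have hST : (fixedBy X f)ᶜ ⊆ T := fun s hs => Set.mem_biUnion hs ⟨0, rfl⟩
  have hfT : T ∈ fixedBy (Set X) f := set_mem_fixedBy_of_movedBy_subset hST
  have hgfT : T ∈ fixedBy (Set X) (g * f) := fixedBy_mul _ g f ⟨hgT, hfT⟩
  by_cases hx : x ∈ T
  · refine hT.subset (Set.range_subset_iff.2 fun d => ?_)
    exact (smul_mem_of_set_mem_fixedBy (fixedBy_subset_fixedBy_zpow _ _ d hgfT)).2 hx
  · have hf_fix : Tᶜ ⊆ fixedBy X f := Set.compl_subset_comm.1 hST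
    have h_orbit : (fun d : ℤ => ((g * f) ^ d) x) = fun d => (g ^ d) x := funext fun d =>
      zpow_apply_eq_of_eqOn (s := Tᶜ) (fun _ => (smul_mem_of_set_mem_fixedBy hgfT).not)
        (fun _ => (smul_mem_of_set_mem_fixedBy hgT).not) (fun y hy => congr_arg g (hf_fix hy))
        d hx
    rw [h_orbit]
    exact hg x

end Equiv.Perm

theorem fAlt_le_finiteMovedBy (X : Type*) :
    FAlt X ≤ MulAction.finiteMovedBy (Equiv.Perm X) X := by
  rw [FAlt, Subgroup.closure_le]
  intro σ (hσ : {x | σ x ≠ x}.ncard = 3)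
  exact Set.finite_of_ncard_pos (s := {x | σ x ≠ x}) (by rw [hσ]; norm_num)

/-- If every element of `G ≤ Sym X` has only finite orbits, then every element of
`⟨G, FAlt X⟩` has only finite orbits. -/
theorem finite_orbits_sup_fAlt {X : Type*} (G : Subgroup (Equiv.Perm X))
    (horb : ∀ g ∈ G, ∀ x : X, (Set.range fun d : ℤ => (g ^ d) x).Finite) :
    ∀ g ∈ G ⊔ FAlt X, ∀ x : X, (Set.range fun d : ℤ => (g ^ d) x).Finite := by
  intro g hg
  obtain ⟨a, ha, f, hf, rfl⟩ :=
    Subgroup.mem_sup_of_normal_right.1 (sup_le_sup_left (fAlt_le_finiteMovedBy X) G hg)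
  exact Equiv.Perm.HasFiniteOrbits.mul_of_mem_finiteMovedBy (horb a ha) hf
end

section
/- Let G be a torsion group and let α be an infinite cardinal with α ≥ #G. Then there exists a torsion group H of cardinality α which has the R_∞ property and which contains a subgroup isomorphic to G. -/
universe u

/-!
Take `H = W × D`, where `W` is the restricted wreath product of `G` with the finitary
permutations of a set `J` of cardinality `α`, and `D` is the restricted direct product of the
dihedral groups `D_p` over the odd primes `p`. Both factors are torsion, `#H = α`, and `G` embeds
into the base of `W`.

Every nontrivial element of `W` has infinitely many conjugates. The rotation `r_p` of `D_p` has
only the conjugates `r_p^{±1}`, so any automorphism `φ` of `H` maps it to an element of order `p`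
with trivial `W`-component; since `p` is coprime to `2q` for every odd prime `q ≠ p`, that
element lies in `⟨r_p⟩`. Hence the parity character `χ_p : H → {±1}` of the `D_p`-coordinate,
which records whether `x` centralizes or inverts `r_p`, satisfies `χ_p ∘ φ = χ_p`. Therefore
`(χ_p)_p` is constant on `φ`-twisted conjugacy classes, and it takes infinitely many values on
the reflections.
-/

open Function Cardinal

section TwistedConjugacy

variable {H A : Type*} [Group H] [CommGroup A]

theorem TwistedConj.map_eq {φ : H ≃* H} {χ : H →* A} (hχ : ∀ x, χ (φ x) = χ x) {a b : H}
    (h : TwistedConj φ a b) : χ a = χ b := by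
  obtain ⟨x, rfl⟩ := h
  rw [map_mul, map_mul, map_inv, hχ, mul_comm, ← mul_assoc, mul_inv_cancel, one_mul]

theorem rInfinity_of_forall_map_eq (χ : H →* A) (hχ : ∀ (φ : H ≃* H) x, χ (φ x) = χ x)
    (hrange : (Set.range χ).Infinite) : RInfinity H := by
  intro φ
  by_contra hfin
  rw [not_infinite_iff_finite] at hfin
  apply hrange
  rw [← Set.range_quot_lift (r := TwistedConj φ) fun _ _ h => h.map_eq (hχ φ)]
  exact Set.finite_range _

end TwistedConjugacy

section Conjugates

theorem finite_conjugatesOf_map {H K : Type*} [Group H] [Group K] (φ : H ≃* K) {a : H}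
    (ha : (conjugatesOf a).Finite) : (conjugatesOf (φ a)).Finite :=
  (ha.image φ).subset fun b hb =>
    ⟨φ.symm b, show IsConj a (φ.symm b) by
      simpa only [MulEquiv.coe_toMonoidHom, MulEquiv.symm_apply_apply] using
        MonoidHom.map_isConj φ.symm.toMonoidHom hb, φ.apply_symm_apply b⟩

theorem fst_eq_one_of_finite_conjugatesOf {W D : Type*} [Group W] [Group D]
    (hW : ∀ w : W, w ≠ 1 → (conjugatesOf w).Infinite) {z : W × D}
    (hz : (conjugatesOf z).Finite) : z.1 = 1 := by
  by_contra hz1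
  refine hW z.1 hz1 ((hz.image Prod.fst).subset fun c hc => ?_)
  obtain ⟨y, rfl⟩ := isConj_iff.mp hc
  exact ⟨(y, 1) * z * (y, 1)⁻¹, isConj_iff.mpr ⟨_, rfl⟩, by simp⟩

variable {H : Type*} [Group H] {χ : H →* ℤˣ} {a : H}

theorem finite_conjugatesOf_of_conj_eq_zpow (ha : ∀ x, x * a * x⁻¹ = a ^ (χ x : ℤ)) :
    (conjugatesOf a).Finite :=
  (Set.finite_range fun u : ℤˣ => a ^ (u : ℤ)).subset fun _ hb =>
    let ⟨x, hx⟩ := isConj_iff.mp hb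
    ⟨χ x, (ha x).symm.trans hx⟩

theorem map_mulEquiv_eq_of_conj_eq_zpow (ha : ∀ x, x * a * x⁻¹ = a ^ (χ x : ℤ))
    (ha2 : a ^ 2 ≠ 1) (φ : H ≃* H) (hφ : φ a ∈ Subgroup.zpowers a) (x : H) :
    χ (φ x) = χ x := by
  obtain ⟨k, hk⟩ := hφ
  have h₁ : φ x * φ a * (φ x)⁻¹ = φ a ^ (χ x : ℤ) := by
    rw [← map_inv, ← map_mul, ← map_mul, ha, map_zpow]
  have h₂ : φ x * φ a * (φ x)⁻¹ = φ a ^ (χ (φ x) : ℤ) := by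
    rw [← hk, ← conj_zpow, ha, ← zpow_mul, ← zpow_mul, mul_comm]
  have hφa : φ a ≠ (φ a)⁻¹ := by
    rwa [Ne, ← mul_eq_one_iff_eq_inv, ← pow_two, ← map_pow, map_eq_one_iff _ φ.injective]
  have key := h₁.symm.trans h₂
  rcases Int.units_eq_one_or (χ x) with h | h <;>
    rcases Int.units_eq_one_or (χ (φ x)) with h' | h' <;>
    simp only [h, h', Units.val_one, Units.val_neg, zpow_one, zpow_neg] at key ⊢
  exacts [(hφa key).elim, (hφa key.symm).elim]

end Conjugates

section RestrictedPi

variable {ι : Type*} (M : ι → Type*) [∀ i, Group (M i)]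

def restrictedPi : Subgroup (∀ i, M i) where
  carrier := {f | {i | f i ≠ 1}.Finite}
  one_mem' := by simp
  mul_mem' {f g} hf hg := (hf.union hg).subset fun i hi => by
    by_contra h
    simp only [Set.mem_union, Set.mem_ofPred_eq, not_or, not_not] at h
    exact hi (by simp [h.1, h.2])
  inv_mem' hf := by simpa using hf

def restrictedPi.mulSingle [DecidableEq ι] (i : ι) : M i →* restrictedPi M :=
  (MonoidHom.mulSingle M i).codRestrict _ fun x =>
    (Set.finite_singleton i).subset fun j hj => by
      by_contra h
      exact hj (Pi.mulSingle_eq_of_ne h x)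

variable {M}

theorem restrictedPi.mulSingle_injective [DecidableEq ι] (i : ι) :
    Injective (restrictedPi.mulSingle M i) :=
  fun _ _ h => Pi.mulSingle_injective i (Subtype.ext_iff.mp h)

@[simp]
theorem restrictedPi.coe_mulSingle [DecidableEq ι] (i : ι) (x : M i) :
    (restrictedPi.mulSingle M i x : ∀ i, M i) = Pi.mulSingle i x := rfl

theorem isMulTorsion_restrictedPi (htor : ∀ i, IsMulTorsion (M i)) :
    IsMulTorsion (restrictedPi M) := by
  intro f
  have hS : {i | (f : ∀ i, M i) i ≠ 1}.Finite := f.2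
  refine isOfFinOrder_iff_pow_eq_one.mpr ⟨∏ i ∈ hS.toFinset, orderOf ((f : ∀ i, M i) i),
    Finset.prod_pos fun i _ => (htor i _).orderOf_pos, Subtype.ext (funext fun i => ?_)⟩
  rw [Subgroup.coe_pow, Pi.pow_apply]
  by_cases hi : (f : ∀ i, M i) i = 1
  · rw [hi, one_pow]; rfl
  · exact orderOf_dvd_iff_pow_eq_one.mp (Finset.dvd_prod_of_mem _ (hS.mem_toFinset.mpr hi))

end RestrictedPi

section FinitaryPerm

variable (J : Type*)

def finitaryPerm : Subgroup (Equiv.Perm J) where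
  carrier := {σ | {x | σ x ≠ x}.Finite}
  one_mem' := by simp
  mul_mem' {σ τ} hσ hτ := (hσ.union hτ).subset fun x hx => by
    by_contra h
    simp only [Set.mem_union, Set.mem_ofPred_eq, not_or, not_not] at h
    exact hx (by simp [h.1, h.2])
  inv_mem' {σ} hσ := hσ.subset fun x hx h => hx (by rw [Equiv.Perm.inv_eq_iff_eq, h])

variable {J}

theorem swap_mem_finitaryPerm [DecidableEq J] (a b : J) : Equiv.swap a b ∈ finitaryPerm J :=
  (Set.toFinite {a, b}).subset fun x hx => by
    by_contra h
    simp only [Set.mem_insert_iff, Set.mem_singleton_iff, not_or] at h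
    exact hx (Equiv.swap_apply_of_ne_of_ne h.1 h.2)

theorem isMulTorsion_finitaryPerm : IsMulTorsion (finitaryPerm J) := by
  classical
  intro σ
  let S := {x | (σ : Equiv.Perm J) x ≠ x}
  have : Finite S := σ.2.to_subtype
  have hσ : Equiv.Perm.ofSubtype ((σ : Equiv.Perm J).subtypePerm (p := (· ∈ S))
      fun x => (σ : Equiv.Perm J).injective.ne_iff) = σ :=
    Equiv.Perm.ofSubtype_subtypePerm _ fun _ hx => hx
  rw [← Submonoid.isOfFinOrder_coe, ← hσ]
  exact Equiv.Perm.ofSubtype.isOfFinOrder (isOfFinOrder_of_finite _)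

end FinitaryPerm

section Cardinality

theorem mk_finite_ne_le {ι : Type*} {M : ι → Type*} (v : ∀ i, M i) :
    #{f : ∀ i, M i // {i | f i ≠ v i}.Finite} ≤ #(Finset (Σ i, M i)) := by
  classical
  let graph (f : {f : ∀ i, M i // {i | f i ≠ v i}.Finite}) : Finset (Σ i, M i) :=
    f.2.toFinset.image fun i => ⟨i, f.1 i⟩
  have mem_graph :
      ∀ f i y, (⟨i, y⟩ : Σ i, M i) ∈ graph f ↔ f.1 i ≠ v i ∧ f.1 i = y := by
    intro f i y
    simp only [graph, Finset.mem_image, Set.Finite.mem_toFinset, Set.mem_ofPred_eq,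
      Sigma.mk.injEq]
    constructor
    · rintro ⟨j, hj, rfl, h⟩; exact ⟨hj, eq_of_heq h⟩
    · rintro ⟨hi, rfl⟩; exact ⟨i, hi, rfl, HEq.rfl⟩
  have eq_of_ne : ∀ f g, graph f = graph g → ∀ i, f.1 i ≠ v i → f.1 i = g.1 i :=
    fun f g hfg i hi => ((mem_graph g i _).mp (hfg ▸ (mem_graph f i _).mpr ⟨hi, rfl⟩)).2.symm
  refine mk_le_of_injective (f := graph) fun f g hfg => Subtype.ext (funext fun i => ?_)
  by_cases hf : f.1 i = v i
  · by_cases hg : g.1 i = v i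
    · rw [hf, hg]
    · exact (eq_of_ne g f hfg.symm i hg).symm
  · exact eq_of_ne f g hfg i hf

theorem mk_restrictedPi_le {ι : Type*} (M : ι → Type*) [∀ i, Group (M i)] :
    #(restrictedPi M) ≤ #(Finset (Σ i, M i)) :=
  (mk_le_of_injective (f := fun f => (⟨f.1, f.2⟩ : {f : ∀ i, M i // {i | f i ≠ 1}.Finite}))
    fun _ _ h => Subtype.ext (Subtype.ext_iff.mp h)).trans (mk_finite_ne_le 1)

theorem mk_finitaryPerm_le (J : Type*) : #(finitaryPerm J) ≤ #(Finset (Σ _ : J, J)) :=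
  (mk_le_of_injective (f := fun σ => (⟨σ.1, σ.2⟩ : {f : J → J // {x | f x ≠ x}.Finite}))
    fun _ _ h => Subtype.ext (Equiv.coe_inj.mp (Subtype.ext_iff.mp h))).trans
    (mk_finite_ne_le id)

end Cardinality

section FinitaryWreath

variable (G J : Type*) [Group G]

def permAct : finitaryPerm J →* MulAut (restrictedPi fun _ : J => G) where
  toFun σ :=
    { toFun := fun f => ⟨fun j => f.1 ((σ : Equiv.Perm J)⁻¹ j),
        f.2.preimage (σ⁻¹ : Equiv.Perm J).injective.injOn⟩
      invFun := fun f => ⟨fun j => f.1 ((σ : Equiv.Perm J) j),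
        f.2.preimage (σ : Equiv.Perm J).injective.injOn⟩
      left_inv := fun f => by simp
      right_inv := fun f => by simp
      map_mul' := fun _ _ => rfl }
  map_one' := rfl
  map_mul' _ _ := rfl

abbrev FinitaryWreath := (restrictedPi fun _ : J => G) ⋊[permAct G J] finitaryPerm J

variable {G J}

namespace FinitaryWreath

def support (x : FinitaryWreath G J) : Set J :=
  {j | (x.left : J → G) j ≠ 1} ∪ {j | (x.right : Equiv.Perm J) j ≠ j}

theorem support_finite (x : FinitaryWreath G J) : (support x).Finite :=
  x.left.2.union x.right.2

theorem support_nonempty {x : FinitaryWreath G J} (hx : x ≠ 1) : (support x).Nonempty := by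
  refine Set.nonempty_iff_ne_empty.mpr fun h => hx ?_
  have h' := Set.eq_empty_iff_forall_notMem.mp h
  simp only [support, Set.mem_union, Set.mem_ofPred_eq, not_or, not_not, forall_and] at h'
  exact SemidirectProduct.ext (Subtype.ext (funext h'.1)) (Subtype.ext (Equiv.ext h'.2))

theorem conj_inr (τ : finitaryPerm J) (x : FinitaryWreath G J) :
    .inr τ * x * (.inr τ)⁻¹ =
      (⟨permAct G J τ x.left, τ * x.right * τ⁻¹⟩ : FinitaryWreath G J) := by
  ext <;> simp [SemidirectProduct.mul_left, SemidirectProduct.mul_right]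

theorem mem_support_conj_inr (τ : finitaryPerm J) (x : FinitaryWreath G J) (j : J) :
    j ∈ support (.inr τ * x * (.inr τ)⁻¹) ↔ (τ : Equiv.Perm J)⁻¹ j ∈ support x := by
  simp only [conj_inr, support]
  simp [permAct, Equiv.Perm.inv_def, ← Equiv.eq_symm_apply]

theorem infinite_conjugatesOf [Infinite J] {x : FinitaryWreath G J} (hx : x ≠ 1) :
    (conjugatesOf x).Infinite := by
  classical
  obtain ⟨s, hs⟩ := support_nonempty hx
  let c (j : J) : FinitaryWreath G J :=
    .inr ⟨_, swap_mem_finitaryPerm s j⟩ * x * (.inr ⟨_, swap_mem_finitaryPerm s j⟩)⁻¹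
  -- Conjugating by `swap s k` with `k ∉ support x` moves `s` to `k` and fixes the other points
  -- outside the support, so the conjugates `c k` are told apart by their supports.
  have mem_support_c :
      ∀ j k, j ∉ support x → k ∉ support x → (j ∈ support (c k) ↔ j = k) := by
    intro j k hj hk
    rw [mem_support_conj_inr, Equiv.swap_inv]
    by_cases hjk : j = k
    · simp [hjk, hs]
    · have hjs : j ≠ s := fun h => hj (h ▸ hs)
      simp [Equiv.swap_apply_of_ne_of_ne hjs hjk, hj, hjk]
  refine (((support_finite x).infinite_compl.image (f := c) fun j hj k hk hjk => ?_).mono ?_)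
  · exact (mem_support_c j k hj hk).mp (hjk ▸ (mem_support_c j j hj hj).mpr rfl)
  · rintro _ ⟨j, -, rfl⟩
    exact isConj_iff.mpr ⟨_, rfl⟩

theorem isMulTorsion (htor : IsMulTorsion G) : IsMulTorsion (FinitaryWreath G J) :=
  IsMulTorsion.extension_closed SemidirectProduct.range_inl_eq_ker_rightHom
    isMulTorsion_finitaryPerm
    (IsMulTorsion.of_surjective SemidirectProduct.inl.rangeRestrict_surjective
      (isMulTorsion_restrictedPi fun _ => htor))

end FinitaryWreath

end FinitaryWreath

namespace FinitaryWreath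

variable {G J : Type u} [Group G]

theorem mk_le [Infinite J] (hG : #G ≤ #J) : #(FinitaryWreath G J) ≤ #J := by
  have hJ : ℵ₀ ≤ #J := aleph0_le_mk J
  have mk_finset_le (X : Type u) [Nonempty X] (hX : #X ≤ #J) :
      #(Finset (Σ _ : J, X)) ≤ #J := by
    rw [mk_finset_of_infinite, mk_sigma, sum_const']
    exact (mul_le_mul' le_rfl hX).trans (mul_eq_self hJ).le
  calc #(FinitaryWreath G J)
      ≤ #(restrictedPi fun _ : J => G) * #(finitaryPerm J) := by
        rw [← lift_id #(restrictedPi _), ← lift_id #(finitaryPerm J), ← mk_prod]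
        exact mk_le_of_injective SemidirectProduct.equivProd.injective
    _ ≤ #J * #J :=
        mul_le_mul' ((mk_restrictedPi_le _).trans (mk_finset_le G hG))
          ((mk_finitaryPerm_le J).trans (mk_finset_le J le_rfl))
    _ = #J := mul_eq_self hJ

theorem le_mk [Nonempty J] : #J ≤ #(FinitaryWreath G J) := by
  classical
  obtain ⟨j₀⟩ := ‹Nonempty J›
  refine mk_le_of_injective (f := fun j => .inr ⟨_, swap_mem_finitaryPerm j₀ j⟩)
    fun j k h => ?_
  simpa using congrArg (fun x : FinitaryWreath G J => (x.right : Equiv.Perm J) j₀) h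

end FinitaryWreath

namespace DihedralGroup

variable {n : ℕ}

def parity : DihedralGroup n →* ℤˣ where
  toFun
    | r _ => 1
    | sr _ => -1
  map_one' := rfl
  map_mul' := by rintro (a | a) (b | b) <;> simp [r_mul_r, r_mul_sr, sr_mul_r, sr_mul_sr]

@[simp]
theorem parity_r (k : ZMod n) : parity (r k) = 1 := rfl

@[simp]
theorem parity_sr (k : ZMod n) : parity (sr k) = -1 := rfl

theorem conj_r_eq_zpow_parity (g : DihedralGroup n) (k : ZMod n) :
    g * r k * g⁻¹ = r k ^ (parity g : ℤ) := by
  cases g <;> simp [r_mul_r, sr_mul_r, sr_mul_sr, inv_r, inv_sr]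

theorem exists_eq_r_of_pow_eq_one {m : ℕ} (hm : Odd m) {x : DihedralGroup n} (hx : x ^ m = 1) :
    ∃ c, x = r c := by
  cases x with
  | r c => exact ⟨c, rfl⟩
  | sr c =>
    have h2 := orderOf_dvd_of_pow_eq_one hx
    rw [orderOf_sr] at h2
    exact absurd (even_iff_two_dvd.mpr h2) (Nat.not_even_iff_odd.mpr hm)

theorem eq_one_of_pow_eq_one_of_coprime {m : ℕ} (hm : m.Coprime (2 * n)) {x : DihedralGroup n}
    (hx : x ^ m = 1) : x = 1 :=
  orderOf_eq_one_iff.mp <| Nat.Coprime.eq_one_of_dvd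
    (hm.coprime_dvd_left (orderOf_dvd_of_pow_eq_one hx))
    (nat_card (n := n) ▸ orderOf_dvd_natCard x)

end DihedralGroup

abbrev OddPrime : Type := {p : ℕ // p.Prime ∧ p ≠ 2}

instance : Infinite OddPrime :=
  (Nat.infinite_setOfPred_prime.sdiff (Set.finite_singleton 2)).to_subtype

instance (p : ULift OddPrime) : NeZero p.down.1 := ⟨p.down.2.1.ne_zero⟩

abbrev DihedralSum : Type u := restrictedPi fun p : ULift.{u} OddPrime => DihedralGroup p.down.1

theorem DihedralSum.exists_eq_mulSingle_of_pow_eq_one {p : ULift.{u} OddPrime}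
    {d : DihedralSum.{u}} (hd : d ^ p.down.1 = 1) :
    ∃ c, d = restrictedPi.mulSingle _ p (DihedralGroup.r c) := by
  have hcoord : ∀ q, d.1 q ^ p.down.1 = 1 := fun q => congrFun (Subtype.ext_iff.mp hd) q
  have hp := p.down.2
  obtain ⟨c, hc⟩ := DihedralGroup.exists_eq_r_of_pow_eq_one (hp.1.odd_of_ne_two hp.2) (hcoord p)
  refine ⟨c, Subtype.ext (funext fun q => ?_)⟩
  by_cases hqp : q = p
  · subst hqp
    simp [hc]
  · have hq := q.down.2
    have hcop : p.down.1.Coprime (2 * q.down.1) :=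
      Nat.Coprime.mul_right (Nat.coprime_two_right.mpr (hp.1.odd_of_ne_two hp.2))
        ((Nat.coprime_primes hp.1 hq.1).mpr fun h => hqp (ULift.ext _ _ (Subtype.ext h.symm)))
    simpa [Pi.mulSingle_eq_of_ne hqp] using
      DihedralGroup.eq_one_of_pow_eq_one_of_coprime hcop (hcoord q)

abbrev WreathTimesDihedral (G J : Type u) [Group G] := FinitaryWreath G J × DihedralSum.{u}

namespace WreathTimesDihedral

open DihedralGroup

variable {G J : Type u} [Group G]

variable (G J) in
def dihedralIncl (p : ULift.{u} OddPrime) : DihedralGroup p.down.1 →* WreathTimesDihedral G J :=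
  (MonoidHom.inr _ _).comp <|
    restrictedPi.mulSingle (fun q : ULift.{u} OddPrime => DihedralGroup q.down.1) p

theorem dihedralIncl_injective (p : ULift.{u} OddPrime) : Injective (dihedralIncl G J p) :=
  Prod.mk_right_injective 1 |>.comp (restrictedPi.mulSingle_injective p)

theorem conj_dihedralIncl (p : ULift.{u} OddPrime) (x : WreathTimesDihedral G J)
    (y : DihedralGroup p.down.1) :
    x * dihedralIncl G J p y * x⁻¹ = dihedralIncl G J p (x.2.1 p * y * (x.2.1 p)⁻¹) := by
  refine Prod.ext (by simp [dihedralIncl]) (Subtype.ext (funext fun q => ?_))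
  exact Pi.apply_mulSingle (fun q (z : DihedralGroup q.down.1) => x.2.1 q * z * (x.2.1 q)⁻¹)
    (fun _ => by simp) p y q

def parityAt (p : ULift.{u} OddPrime) : WreathTimesDihedral G J →* ℤˣ :=
  parity.comp <| (Pi.evalMonoidHom _ p).comp <| (restrictedPi _).subtype.comp (MonoidHom.snd _ _)

theorem parityAt_dihedralIncl (p q : ULift.{u} OddPrime) (y : DihedralGroup p.down.1) :
    parityAt q (dihedralIncl G J p y) = if q = p then parity y else 1 := by
  by_cases h : q = p
  · subst h; simp [parityAt, dihedralIncl]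
  · simp [parityAt, dihedralIncl, h]

variable (G J) in
def rot (p : ULift.{u} OddPrime) : WreathTimesDihedral G J := dihedralIncl G J p (r 1)

theorem conj_rot (p : ULift.{u} OddPrime) (x : WreathTimesDihedral G J) :
    x * rot G J p * x⁻¹ = rot G J p ^ (parityAt p x : ℤ) := by
  rw [rot, conj_dihedralIncl, conj_r_eq_zpow_parity, map_zpow]
  rfl

variable (G J) in
theorem orderOf_rot (p : ULift.{u} OddPrime) : orderOf (rot G J p) = p.down.1 := by
  rw [rot, orderOf_injective _ (dihedralIncl_injective p), orderOf_r_one]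

theorem rot_sq_ne_one (p : ULift.{u} OddPrime) : rot G J p ^ 2 ≠ 1 :=
  pow_ne_one_of_lt_orderOf two_ne_zero <|
    orderOf_rot G J p ▸ p.down.2.1.two_le.lt_of_ne' p.down.2.2

theorem mem_zpowers_rot {p : ULift.{u} OddPrime} {z : WreathTimesDihedral G J} (h1 : z.1 = 1)
    (hp : z ^ p.down.1 = 1) : z ∈ Subgroup.zpowers (rot G J p) := by
  obtain ⟨c, hc⟩ := DihedralSum.exists_eq_mulSingle_of_pow_eq_one (d := z.2)
    (p := p) (by rw [← Prod.pow_snd, hp]; rfl)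
  have hz : z = dihedralIncl G J p (r 1 ^ c.val) := by
    refine Prod.ext h1 ?_
    rw [hc, r_one_pow, ZMod.natCast_zmod_val]
    rfl
  rw [hz, map_pow, ← rot]
  exact Subgroup.npow_mem_zpowers _ _

theorem mulEquiv_rot_mem_zpowers [Infinite J]
    (φ : WreathTimesDihedral G J ≃* WreathTimesDihedral G J) (p : ULift.{u} OddPrime) :
    φ (rot G J p) ∈ Subgroup.zpowers (rot G J p) := by
  refine mem_zpowers_rot (fst_eq_one_of_finite_conjugatesOf
    (fun _ : FinitaryWreath G J => FinitaryWreath.infinite_conjugatesOf) ?_) ?_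
  · exact finite_conjugatesOf_map φ (finite_conjugatesOf_of_conj_eq_zpow (conj_rot p))
  · rw [← map_pow, ← orderOf_rot G J p, pow_orderOf_eq_one, map_one]

theorem rInfinity [Infinite J] : RInfinity (WreathTimesDihedral G J) := by
  refine rInfinity_of_forall_map_eq (MonoidHom.pi parityAt) (fun φ x => funext fun p =>
    map_mulEquiv_eq_of_conj_eq_zpow (conj_rot p) (rot_sq_ne_one p) φ
      (mulEquiv_rot_mem_zpowers φ p) x) ?_
  refine (Set.infinite_range_of_injective
    (f := fun p => MonoidHom.pi parityAt (dihedralIncl G J p (sr 0))) fun p q h => ?_).mono ?_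
  · simpa [parityAt_dihedralIncl] using congrFun h p
  · rintro _ ⟨p, rfl⟩
    exact ⟨_, rfl⟩

theorem isMulTorsion (htor : IsMulTorsion G) : IsMulTorsion (WreathTimesDihedral G J) :=
  fun x => .prod_mk (FinitaryWreath.isMulTorsion htor x.1)
    (isMulTorsion_restrictedPi (fun _ => isMulTorsion_of_finite) x.2)

theorem mk_eq [Infinite J] (hG : #G ≤ #J) : #(WreathTimesDihedral G J) = #J := by
  have hJ : ℵ₀ ≤ #J := aleph0_le_mk J
  refine le_antisymm ?_ (FinitaryWreath.le_mk.trans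
    (mk_le_of_injective (Prod.mk_left_injective (1 : DihedralSum.{u}))))
  calc #(WreathTimesDihedral G J) = #(FinitaryWreath G J) * #DihedralSum.{u} := by
        rw [mk_prod, lift_id, lift_id]
    _ ≤ #J * #J :=
        mul_le_mul' (FinitaryWreath.mk_le hG) ((mk_restrictedPi_le
          (fun p : ULift.{u} OddPrime => DihedralGroup p.down.1)).trans (mk_le_aleph0.trans hJ))
    _ = #J := mul_eq_self hJ

variable (G) in
def embedding [DecidableEq J] (j₀ : J) : G →* WreathTimesDihedral G J :=
  (MonoidHom.inl _ _).comp <|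
    SemidirectProduct.inl.comp (restrictedPi.mulSingle (fun _ : J => G) j₀)

theorem embedding_injective [DecidableEq J] (j₀ : J) : Injective (embedding G j₀) :=
  Prod.mk_left_injective 1 |>.comp <|
    SemidirectProduct.inl_injective.comp (restrictedPi.mulSingle_injective j₀)

end WreathTimesDihedral

/-- For any torsion group `G` and any infinite cardinal `α ≥ #G`, there is a torsion group
of cardinality `α` with the `R∞` property containing an isomorphic copy of `G`. -/
theorem exists_torsion_rinfinity_of_card {G : Type u} [Group G]
    (htor : Monoid.IsTorsion G) (α : Cardinal.{u})
    (hα : Cardinal.aleph0 ≤ α) (hGα : Cardinal.mk G ≤ α) :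
    ∃ (H : Type u) (_ : Group H), Cardinal.mk H = α ∧ Monoid.IsTorsion H ∧
      RInfinity H ∧ ∃ f : G →* H, Function.Injective f := by
  classical
  obtain ⟨J, rfl⟩ : ∃ J : Type u, #J = α := ⟨α.out, mk_out α⟩
  have : Infinite J := infinite_iff.mpr hα
  obtain ⟨j₀⟩ : Nonempty J := inferInstance
  exact ⟨WreathTimesDihedral G J, inferInstance, WreathTimesDihedral.mk_eq hGα,
    WreathTimesDihedral.isMulTorsion htor, WreathTimesDihedral.rInfinity,
    WreathTimesDihedral.embedding G j₀, WreathTimesDihedral.embedding_injective j₀⟩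
end

section
/- Let G be a finitely generated group such that G has the R_∞ property and every finite-index subgroup of G has the R_∞ property. Then every group commensurable to G has the R_∞ property. -/
/-- Two groups are commensurable if they have isomorphic finite-index normal subgroups. -/
def Commensurable' (G H : Type*) [Group G] [Group H] : Prop :=
  ∃ (NG : Subgroup G) (NH : Subgroup H), NG.Normal ∧ NH.Normal ∧
    NG.FiniteIndex ∧ NH.FiniteIndex ∧ Nonempty (↥NG ≃* ↥NH)

section

variable {G : Type*} [Group G]

theorem twistedConj_equivalence_s18 (φ : G ≃* G) : Equivalence (TwistedConj φ) where
  refl _ := ⟨1, by simp⟩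
  symm := by
    rintro _ _ ⟨x, rfl⟩
    exact ⟨x⁻¹, by simp [mul_assoc]⟩
  trans := by
    rintro _ _ _ ⟨x, rfl⟩ ⟨y, rfl⟩
    exact ⟨x * y, by simp [mul_assoc]⟩

theorem RInfinity.of_mulEquiv {H : Type*} [Group H] (e : G ≃* H) (h : RInfinity H) :
    RInfinity G := by
  intro φ
  let ψ : H ≃* H := (e.symm.trans φ).trans e
  have hcompat (a b : G) : TwistedConj φ a b → TwistedConj ψ (e a) (e b) := by
    rintro ⟨x, rfl⟩
    exact ⟨e x, by simp [ψ]⟩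
  have hsurj : Function.Surjective (Quot.map e hcompat) := by
    rintro ⟨b⟩
    exact ⟨Quot.mk _ (e.symm b), by simp [Quot.map]⟩
  have := h ψ
  exact Infinite.of_surjective _ hsurj

/-- Every class of `ψ` contains `(φ c)⁻¹ * a * c` for `a` a representative of a class of `φ`
and `c` a representative of a coset of `L`, so `ψ` has at most `R(φ) * [G : L]` classes. -/
theorem finite_quot_twistedConj_of_restrict {L : Subgroup G} [L.FiniteIndex] {φ : G ≃* G}
    {ψ : L ≃* L} (hψ : ∀ l : L, (ψ l : G) = φ l) [Finite (Quot (TwistedConj φ))] :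
    Finite (Quot (TwistedConj ψ)) := by
  classical
  let g : Quot (TwistedConj φ) × (G ⧸ L) → Quot (TwistedConj ψ) := fun p =>
    if h : (φ p.2.out)⁻¹ * p.1.out * p.2.out ∈ L then Quot.mk _ ⟨_, h⟩ else Quot.mk _ 1
  refine Finite.of_surjective g ?_
  rintro ⟨b⟩
  set q := Quot.mk (TwistedConj φ) (b : G)
  obtain ⟨x, hx⟩ : TwistedConj φ q.out b :=
    (twistedConj_equivalence_s18 φ).eqvGen_iff.mp (Quot.eq.mp (Quot.out_eq q))
  refine ⟨(q, x), ?_⟩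
  simp only [g]
  obtain ⟨l, hl⟩ := QuotientGroup.mk_out_eq_mul L x
  set y := (QuotientGroup.mk x : G ⧸ L).out
  have hy : (φ y)⁻¹ * q.out * y = ((ψ l)⁻¹ * b * l : L) := by
    rw [hl, Subgroup.coe_mul, Subgroup.coe_mul, Subgroup.coe_inv, hψ, ← hx]
    simp only [map_mul]
    group
  have hyL : (φ y)⁻¹ * q.out * y ∈ L := hy ▸ SetLike.coe_mem _
  refine (dif_pos hyL).trans (Quot.sound ?_)
  exact ⟨l⁻¹, Subtype.ext (by simp [hy, hψ, mul_assoc])⟩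

theorem RInfinity.of_characteristic_finiteIndex {L : Subgroup G} [hL : L.Characteristic]
    [L.FiniteIndex] (h : RInfinity L) : RInfinity G := by
  intro φ
  let ψ : L ≃* L := (φ.subgroupMap L).trans
    (MulEquiv.subgroupCongr (Subgroup.characteristic_iff_map_eq.mp hL φ))
  rw [← not_finite_iff_infinite]
  intro
  exact (h ψ).not_finite (finite_quot_twistedConj_of_restrict (ψ := ψ) fun _ => rfl)

theorem finite_monoidHom_of_fg (M : Type*) [Monoid M] [Finite M] [Group.FG G] :
    Finite (G →* M) := by
  obtain ⟨S, hS, hSfin⟩ := Group.fg_iff.mp ‹Group.FG G›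
  have := hSfin.to_subtype
  refine Finite.of_injective (fun f : G →* M => fun s : S => f s) fun f g hfg => ?_
  exact MonoidHom.eq_of_eqOn_dense hS fun x hx => congrFun hfg ⟨x, hx⟩

theorem Group.fg_of_fg_of_finiteIndex (N : Subgroup G) [N.FiniteIndex] [Group.FG N] :
    Group.FG G := by
  obtain ⟨S, hS, hSfin⟩ := Group.fg_iff.mp ‹Group.FG N›
  let T : Set G := Subtype.val '' S ∪ Set.range fun q : G ⧸ N => q.out
  refine Group.fg_iff.mpr ⟨T, eq_top_iff.mpr fun k _ => ?_,
    (hSfin.image _).union (Set.finite_range _)⟩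
  have hN : N ≤ Subgroup.closure T := by
    rw [← N.range_subtype, MonoidHom.range_eq_map, ← hS, MonoidHom.map_closure]
    exact Subgroup.closure_mono Set.subset_union_left
  have hk : (k : G ⧸ N).out⁻¹ * k ∈ N :=
    QuotientGroup.eq.mp (QuotientGroup.out_eq' (k : G ⧸ N))
  have hout : (k : G ⧸ N).out ∈ Subgroup.closure T :=
    Subgroup.subset_closure (Or.inr ⟨k, rfl⟩)
  simpa using mul_mem hout (hN hk)

/-- A subgroup of index `n` is the stabiliser of a point for the action of `G` on its cosets,
which is an action by permutations of `Fin n`. -/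
theorem Subgroup.finite_setOf_index_eq [Group.FG G] {n : ℕ} (hn : n ≠ 0) :
    {H : Subgroup G | H.index = n}.Finite := by
  have := finite_monoidHom_of_fg (G := G) (Equiv.Perm (Fin n))
  refine (Set.finite_range fun p : (G →* Equiv.Perm (Fin n)) × Fin n =>
    (MulAction.stabilizer (Equiv.Perm (Fin n)) p.2).comap p.1).subset ?_
  rintro H rfl
  let e : G ⧸ H ≃ Fin H.index := Nat.equivFinOfCardPos hn
  refine ⟨(e.permCongrHom.toMonoidHom.comp (MulAction.toPermHom G (G ⧸ H)), e (1 : G)), ?_⟩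
  ext k
  simp [QuotientGroup.eq]

theorem Subgroup.exists_characteristic_finiteIndex_le [Group.FG G] (N : Subgroup G)
    [N.FiniteIndex] : ∃ L : Subgroup G, L.Characteristic ∧ L.FiniteIndex ∧ L ≤ N := by
  have hN := Subgroup.FiniteIndex.index_ne_zero (H := N)
  have := (finite_setOf_index_eq (G := G) hN).to_subtype
  have hL : (⨅ H : {H : Subgroup G | H.index = N.index}, H.1).FiniteIndex :=
    Subgroup.finiteIndex_iInf fun H => ⟨(show H.1.index = N.index from H.2).trans_ne hN⟩
  refine ⟨_, ?_, hL, iInf_le (fun H : {H : Subgroup G | H.index = N.index} => H.1) ⟨N, rfl⟩⟩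
  refine Subgroup.characteristic_iff_le_comap.mpr fun ϕ x hx => ?_
  simp only [Subgroup.mem_comap, Subgroup.mem_iInf] at hx ⊢
  intro H
  exact hx ⟨H.1.comap ϕ.toMonoidHom, by
    rw [Set.mem_ofPred_eq, Subgroup.index_comap_of_surjective _ ϕ.surjective, H.2]⟩

def HereditarilyRInfinity (G : Type*) [Group G] : Prop :=
  ∀ H : Subgroup G, H.FiniteIndex → RInfinity H

theorem HereditarilyRInfinity.of_injective {H : Type*} [Group H] {f : G →* H}
    (hf : Function.Injective f) [hfr : f.range.FiniteIndex] (h : HereditarilyRInfinity H) :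
    HereditarilyRInfinity G := by
  intro M hM
  have : (M.map f).FiniteIndex :=
    ⟨by rw [M.index_map_of_injective hf]; exact mul_ne_zero hM.index_ne_zero hfr.index_ne_zero⟩
  exact (h _ this).of_mulEquiv (M.equivMapOfInjective f hf)

end

theorem rinfinity_of_commensurable_general {G : Type*} [Group G] (hfg : Group.FG G)
    (hsub : ∀ H : Subgroup G, H.FiniteIndex → RInfinity ↥H)
    {K : Type*} [Group K] (hcom : Commensurable' K G) :
    RInfinity K := by
  obtain ⟨NK, NG, -, -, hNK, hNG, ⟨e⟩⟩ := hcom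
  let f : NK →* G := NG.subtype.comp e.toMonoidHom
  have : f.range.FiniteIndex := by
    rwa [MonoidHom.range_comp, MonoidHom.range_eq_top.mpr e.surjective, ← MonoidHom.range_eq_map,
      NG.range_subtype]
  have hNKsub : HereditarilyRInfinity NK :=
    HereditarilyRInfinity.of_injective (f := f) (NG.subtype_injective.comp e.injective) hsub
  have : Group.FG NK := Group.fg_of_surjective (f := e.symm.toMonoidHom) e.symm.surjective
  have : Group.FG K := Group.fg_of_fg_of_finiteIndex NK
  obtain ⟨L, _, _, hLN⟩ := NK.exists_characteristic_finiteIndex_le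
  exact RInfinity.of_characteristic_finiteIndex
    ((hNKsub _ inferInstance).of_mulEquiv (Subgroup.subgroupOfEquivOfLe hLN).symm)

/-- If a finitely generated group `G` and all its finite-index subgroups have the `R∞`
property, then every group commensurable to `G` has the `R∞` property. -/
theorem rinfinity_of_commensurable {G : Type*} [Group G] (hfg : Group.FG G)
    (hG : RInfinity G) (hsub : ∀ H : Subgroup G, H.FiniteIndex → RInfinity ↥H)
    {K : Type*} [Group K] (hcom : Commensurable' K G) :
    RInfinity K :=
  rinfinity_of_commensurable_general hfg hsub hcom
end

section
/- There exist uncountably many pairwise non-isomorphic countable torsion groups each of which has the R_∞ property; i.e. there is an uncountable index type ι and a family of groups (G i) for i ∈ ι such that each G i is countable and torsion and has the R_∞ property, and G i ≅ G j implies i = j. -/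
open Function SemidirectProduct Multiplicative
open scoped commutatorElement

/-!
Let `p₀ < p₁ < ⋯` be the primes from 5 on. For subgroups `U n ≤ (ZMod pₙ)ˣ` containing `-1`, let
`G_U` be the group of finitely supported families in `∏ₙ AGL₁(ZMod pₙ)` whose `n`-th slope lies
in `U n`; it is countable and torsion.

Since `-1 ∈ U n`, every translation at place `n` is a commutator; conversely an element with all
slopes trivial and of order dividing `pₙ` is a translation at place `n`. Hence isomorphisms
`G_U ≃* G_V` map translations at `n` to translations at `n`, and as `g` acts on these by
multiplication by its `n`-th slope, isomorphisms preserve all slopes. Slopes are abelian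
invariants, so they are constant on twisted conjugacy classes, and the elements with slope `-1`
at a single place lie in pairwise distinct classes. Preservation of slopes also gives `U ≤ V`, so
`U n = ⊤` for `n ∈ S` and `U n = {±1}` otherwise yields pairwise non-isomorphic groups indexed by
`S ⊆ ℕ`.
-/

section FiniteSupport

variable {ι : Type*} {K : ι → Type*} [∀ i, Group (K i)]

variable (K) in
def Pi.finiteSupportSubgroup : Subgroup (∀ i, K i) where
  carrier := {f | {i | f i ≠ 1}.Finite}
  one_mem' := by simp
  mul_mem' {f g} hf hg := (hf.union hg).subset fun i hi => by
    by_contra! h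
    simp_all
  inv_mem' hf := by simpa using hf

theorem Pi.isOfFinOrder_of_finite_support {f : ∀ i, K i} (hK : ∀ i, IsOfFinOrder (f i))
    (hf : {i | f i ≠ 1}.Finite) : IsOfFinOrder f := by
  refine isOfFinOrder_iff_pow_eq_one.2
    ⟨∏ i ∈ hf.toFinset, orderOf (f i), Finset.prod_pos fun i _ => (hK i).orderOf_pos, ?_⟩
  funext i
  by_cases hi : i ∈ hf.toFinset
  · exact orderOf_dvd_iff_pow_eq_one.1 (Finset.dvd_prod_of_mem _ hi)
  · simp_all

theorem Set.countable_setOf_finite_support [Countable ι] [∀ i, Countable (K i)] :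
    {f : ∀ i, K i | {i | f i ≠ 1}.Finite}.Countable := by
  classical
  have hcover : {f : ∀ i, K i | {i | f i ≠ 1}.Finite} ⊆
      ⋃ s : Finset ι,
        range fun g : (∀ i : s, K i) => fun i => if h : i ∈ s then g ⟨i, h⟩ else 1 := by
    intro f hf
    refine mem_iUnion.2 ⟨hf.toFinset, fun i => f i, funext fun i => ?_⟩
    dsimp only
    split_ifs with hi
    · rfl
    · simp_all
  exact (countable_iUnion fun _ => countable_range _).mono hcover

end FiniteSupport

section AffineGroup

variable (R : Type*) [CommRing R]

def AffineGroup.unitsMulAut : Rˣ →* MulAut (Multiplicative R) :=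
  (MulAutMultiplicative R).symm.toMonoidHom.comp (DistribMulAction.toAddAut Rˣ R)

/-- `⟨ofAdd v, u⟩` is the affine map `x ↦ u * x + v`; `inl` gives the translations and `right`
the slope. -/
abbrev AffineGroup := Multiplicative R ⋊[AffineGroup.unitsMulAut R] Rˣ

variable {R}

namespace AffineGroup

theorem unitsMulAut_apply (u : Rˣ) (a : Multiplicative R) :
    unitsMulAut R u a = ofAdd (u * toAdd a) :=
  rfl

instance [Finite R] : Finite (AffineGroup R) := Finite.of_equiv _ equivProd.symm

theorem mul_inl_mul_inv (g : AffineGroup R) (v : R) :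
    g * inl (ofAdd v) * g⁻¹ = inl (ofAdd (g.right * v)) := by
  ext
  · apply toAdd.injective
    simp only [mul_left, inv_left, mul_right, left_inl, right_inl, mul_one, unitsMulAut_apply,
      toAdd_mul, toAdd_ofAdd, toAdd_inv]
    rw [Units.mul_inv_cancel_left]
    simp
  · simp

theorem inl_pow (a : Multiplicative R) (k : ℕ) :
    (inl a : AffineGroup R) ^ k = inl (ofAdd (k * toAdd a)) := by
  rw [← map_pow, ← nsmul_eq_mul, ofAdd_nsmul, ofAdd_toAdd]

theorem commutatorElement_inr_inl (u : Rˣ) (v : R) :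
    ⁅(inr u : AffineGroup R), (inl (ofAdd v) : AffineGroup R)⁆ = inl (ofAdd ((u - 1) * v)) := by
  rw [commutatorElement_def, mul_inl_mul_inv, right_inr,
    ← map_inv (inl (G := Rˣ) (φ := unitsMulAut R)), ← map_mul, ← ofAdd_neg, ← ofAdd_add]
  congr 2
  ring

theorem eq_inl_of_right_eq_one {x : AffineGroup R} (h : x.right = 1) : x = inl x.left := by
  conv_lhs => rw [← inl_left_mul_inr_right x, h, map_one, mul_one]

end AffineGroup

end AffineGroup

instance : Uncountable (Set ℕ) :=
  not_countable_iff.1 fun _ =>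
    let ⟨f, hf⟩ := exists_surjective_nat (Set ℕ)
    cantor_surjective f hf

noncomputable section

namespace TorsionRInfinity

/-- The primes `5, 7, 11, …`; avoiding `2` and `3` makes `-1 ≠ 1` and `{±1} ≠ (ZMod (p n))ˣ`. -/
def p (n : ℕ) : ℕ := Nat.nth Nat.Prime (n + 2)

theorem p_prime (n : ℕ) : (p n).Prime := Nat.prime_nth_prime _

instance (n : ℕ) : Fact (p n).Prime := ⟨p_prime n⟩

theorem five_le_p (n : ℕ) : 5 ≤ p n :=
  (Nat.nth_prime_two_eq_five ▸ Nat.nth_monotone Nat.infinite_setOfPred_prime (by omega) : _)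

theorem p_injective : Injective p :=
  fun _ _ h => by simpa using Nat.nth_injective Nat.infinite_setOfPred_prime h

theorem natCast_p_ne_zero {m n : ℕ} (h : m ≠ n) : (p n : ZMod (p m)) ≠ 0 := by
  rw [Ne, ZMod.natCast_eq_zero_iff, Nat.prime_dvd_prime_iff_eq (p_prime m) (p_prime n)]
  exact fun h' => h (p_injective h')

theorem two_ne_zero_zmod_p (n : ℕ) : (2 : ZMod (p n)) ≠ 0 := by
  have h := five_le_p n
  exact_mod_cast (ZMod.natCast_eq_zero_iff 2 (p n)).not.2 fun h2 => by
    have := Nat.le_of_dvd two_pos h2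
    omega

theorem units_neg_one_ne_one (n : ℕ) : (-1 : (ZMod (p n))ˣ) ≠ 1 := by
  have : Fact (2 < p n) := ⟨by linarith [five_le_p n]⟩
  exact fun h => ZMod.neg_one_ne_one (by simpa using congrArg Units.val h)

theorem zpowers_neg_one_ne_top (n : ℕ) : Subgroup.zpowers (-1 : (ZMod (p n))ˣ) ≠ ⊤ := by
  intro h
  have hcard : Nat.card (Subgroup.zpowers (-1 : (ZMod (p n))ˣ)) ≤ 2 := by
    rw [Nat.card_zpowers]
    exact orderOf_le_of_pow_eq_one two_pos (by simp)
  rw [h, Subgroup.card_top, Nat.card_eq_fintype_card, ZMod.card_units] at hcard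
  have := five_le_p n
  omega

abbrev A (n : ℕ) := AffineGroup (ZMod (p n))

variable {U V : ∀ n, Subgroup (ZMod (p n))ˣ}

variable (U) in
def affineProduct : Subgroup (∀ n, A n) :=
  Pi.finiteSupportSubgroup A ⊓ Subgroup.pi Set.univ fun n => (U n).comap rightHom

theorem mem_affineProduct {f : ∀ n, A n} :
    f ∈ affineProduct U ↔ {n | f n ≠ 1}.Finite ∧ ∀ n, (f n).right ∈ U n := by
  simp [affineProduct, Pi.finiteSupportSubgroup, Subgroup.mem_pi]

instance : Countable (affineProduct U) :=
  (Set.countable_setOf_finite_support.mono fun _ hf => (mem_affineProduct.1 hf).1).to_subtype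

theorem isMulTorsion_affineProduct : IsMulTorsion (affineProduct U) := fun g =>
  Submonoid.isOfFinOrder_coe.1 <| Pi.isOfFinOrder_of_finite_support
    (fun _ => isOfFinOrder_of_finite _) (mem_affineProduct.1 g.2).1

def single (n : ℕ) (x : A n) (hx : x.right ∈ U n) : affineProduct U :=
  ⟨Pi.mulSingle n x, mem_affineProduct.2 ⟨(Set.finite_singleton n).subset fun m hm => by
    by_contra h; simp_all, fun m => by
    rcases eq_or_ne m n with rfl | h
    · simpa
    · simp [h, one_mem]⟩⟩

def translation (n : ℕ) (v : ZMod (p n)) : affineProduct U :=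
  single n (inl (ofAdd v)) (by simp [one_mem])

variable (U) in
def slope (n : ℕ) : affineProduct U →* (ZMod (p n))ˣ :=
  rightHom.comp ((Pi.evalMonoidHom A n).comp (affineProduct U).subtype)

theorem slope_mem (n : ℕ) (g : affineProduct U) : slope U n g ∈ U n :=
  (mem_affineProduct.1 g.2).2 n

theorem slope_single (n : ℕ) (x : A n) (hx : x.right ∈ U n) :
    slope U n (single n x hx) = x.right := by
  simp [slope, single]

theorem slope_single_of_ne {m n : ℕ} (h : m ≠ n) (x : A n) (hx : x.right ∈ U n) :
    slope U m (single n x hx) = 1 := by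
  simp [slope, single, h]

theorem slope_commutatorElement (m : ℕ) (a b : affineProduct U) : slope U m ⁅a, b⁆ = 1 := by
  rw [map_commutatorElement, commutatorElement_eq_one_iff_mul_comm, mul_comm]

theorem translation_zero (n : ℕ) : translation (U := U) n 0 = 1 := by
  ext : 1
  simp [translation, single]

theorem translation_injective (n : ℕ) : Injective (translation (U := U) n) := fun v w h => by
  simpa [translation, single] using congrArg Subtype.val h

theorem translation_pow (n : ℕ) (v : ZMod (p n)) (k : ℕ) :
    translation (U := U) n v ^ k = translation n (k * v) := by
  ext : 1
  simp only [translation, single, SubgroupClass.coe_pow]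
  rw [← Pi.mulSingle_pow, AffineGroup.inl_pow, toAdd_ofAdd]

theorem mul_translation_mul_inv (g : affineProduct U) (n : ℕ) (v : ZMod (p n)) :
    g * translation n v * g⁻¹ = translation n (slope U n g * v) := by
  ext m : 2
  rcases eq_or_ne m n with rfl | h
  · simp [translation, single, slope, AffineGroup.mul_inl_mul_inv]
  · simp [translation, single, h]

theorem commutatorElement_single_translation (n : ℕ) (u : (ZMod (p n))ˣ) (hu : u ∈ U n)
    (v : ZMod (p n)) :
    ⁅single n (inr u) (by simpa), translation n v⁆ = translation (U := U) n ((u - 1) * v) := by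
  ext m : 2
  rcases eq_or_ne m n with rfl | h
  · simpa [translation, single, commutatorElement_def] using
      AffineGroup.commutatorElement_inr_inl u v
  · simp [translation, single, commutatorElement_def, h]

theorem exists_commutatorElement_eq_translation {n : ℕ} (hU : -1 ∈ U n) (v : ZMod (p n)) :
    ∃ a b : affineProduct U, ⁅a, b⁆ = translation n v := by
  refine ⟨single n (inr (-1)) (by simpa), translation n (-(2⁻¹ * v)), ?_⟩
  rw [commutatorElement_single_translation n (-1) hU]
  congr 1
  rw [Units.val_neg, Units.val_one]
  field_simp [two_ne_zero_zmod_p n]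
  ring

theorem exists_eq_translation_of_pow_eq_one {n : ℕ} {x : affineProduct U}
    (hx : ∀ m, slope U m x = 1) (hpx : x ^ p n = 1) : ∃ v, x = translation n v := by
  refine ⟨toAdd (x.1 n).left, Subtype.ext (funext fun m => ?_)⟩
  have hxm : x.1 m = inl (x.1 m).left := AffineGroup.eq_inl_of_right_eq_one (hx m)
  rcases eq_or_ne m n with rfl | hmn
  · simpa [translation, single] using hxm
  · have hpow : x.1 m ^ p n = 1 := congrFun (congrArg Subtype.val hpx) m
    rw [hxm, AffineGroup.inl_pow, ← map_one inl, inl_inj, ← ofAdd_zero, ofAdd.injective.eq_iff,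
      mul_eq_zero] at hpow
    rw [hxm, toAdd_eq_zero.1 (hpow.resolve_left (natCast_p_ne_zero hmn)), map_one]
    simp [translation, single, hmn]

theorem slope_mulEquiv (hU : ∀ n, -1 ∈ U n) (θ : affineProduct U ≃* affineProduct V) (n : ℕ)
    (g : affineProduct U) : slope V n (θ g) = slope U n g := by
  obtain ⟨w, hw⟩ : ∃ w, θ (translation n 1) = translation n w := by
    obtain ⟨a, b, hab⟩ := exists_commutatorElement_eq_translation (hU n) 1
    refine exists_eq_translation_of_pow_eq_one (fun m => ?_) ?_
    · rw [← hab, map_commutatorElement, slope_commutatorElement]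
    · rw [← map_pow, translation_pow, ZMod.natCast_self, zero_mul, translation_zero, map_one]
  have hw0 : w ≠ 0 := by
    rintro rfl
    rw [translation_zero, MulEquiv.map_eq_one_iff, ← translation_zero] at hw
    exact one_ne_zero (translation_injective n hw)
  have hconj : g * translation n 1 * g⁻¹ = translation n 1 ^ (slope U n g : ZMod (p n)).val := by
    rw [mul_translation_mul_inv, translation_pow, ZMod.natCast_zmod_val, mul_one]
  have := congrArg θ hconj
  rw [map_mul, map_mul, map_inv, map_pow, hw, mul_translation_mul_inv, translation_pow,
    ZMod.natCast_zmod_val] at this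
  exact Units.ext (mul_right_cancel₀ hw0 (translation_injective n this))

theorem slope_eq_of_twistedConj (hU : ∀ n, -1 ∈ U n) {φ : affineProduct U ≃* affineProduct U}
    {a b : affineProduct U} (h : TwistedConj φ a b) (n : ℕ) : slope U n a = slope U n b := by
  obtain ⟨x, rfl⟩ := h
  rw [map_mul, map_mul, map_inv, slope_mulEquiv hU, mul_comm, mul_inv_cancel_left]

theorem rInfinity_affineProduct (hU : ∀ n, -1 ∈ U n) : RInfinity (affineProduct U) := by
  intro φ
  refine Infinite.of_injective (fun n => Quot.mk _ (single n (inr (-1)) (by simpa using hU n)))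
    fun m n h => ?_
  have := congrArg (Quot.lift (slope U m) fun _ _ h => slope_eq_of_twistedConj hU h m) h
  by_contra hmn
  simp only [slope_single, slope_single_of_ne hmn, right_inr] at this
  exact units_neg_one_ne_one m this

theorem le_of_mulEquiv (hU : ∀ n, -1 ∈ U n) (θ : affineProduct U ≃* affineProduct V) :
    U ≤ V := fun n u hu => by
  have := slope_mem n (θ (single n (inr u) (by simpa)))
  rwa [slope_mulEquiv hU, slope_single, right_inr] at this

open scoped Classical in
def allowedSlopes (S : Set ℕ) (n : ℕ) : Subgroup (ZMod (p n))ˣ :=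
  if n ∈ S then ⊤ else Subgroup.zpowers (-1)

theorem neg_one_mem_allowedSlopes (S : Set ℕ) (n : ℕ) : -1 ∈ allowedSlopes S n := by
  unfold allowedSlopes
  split_ifs
  exacts [Subgroup.mem_top _, Subgroup.mem_zpowers _]

theorem subset_of_allowedSlopes_le {S T : Set ℕ} (h : allowedSlopes S ≤ allowedSlopes T) :
    S ⊆ T := fun n hS => by
  by_contra hT
  have := h n
  simp only [allowedSlopes, hS, hT, if_true, if_false, top_le_iff] at this
  exact zpowers_neg_one_ne_top n this

end TorsionRInfinity

end

open TorsionRInfinity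

/-- There exist uncountably many pairwise non-isomorphic countable torsion groups with
the `R∞` property. -/
theorem exists_uncountably_many_torsion_rinfinity :
    ∃ (ι : Type) (_ : Uncountable ι) (G : ι → Type) (_ : ∀ i, Group (G i)),
      (∀ i, Countable (G i)) ∧ (∀ i, Monoid.IsTorsion (G i)) ∧ (∀ i, RInfinity (G i)) ∧
      (∀ i j : ι, Nonempty (G i ≃* G j) → i = j) := by
  refine ⟨Set ℕ, inferInstance, fun S => affineProduct (allowedSlopes S), fun _ => inferInstance,
    fun _ => inferInstance, fun _ => isMulTorsion_affineProduct,
    fun S => rInfinity_affineProduct (neg_one_mem_allowedSlopes S), fun S T ⟨θ⟩ => ?_⟩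
  exact (subset_of_allowedSlopes_le (le_of_mulEquiv (neg_one_mem_allowedSlopes S) θ)).antisymm
    (subset_of_allowedSlopes_le (le_of_mulEquiv (neg_one_mem_allowedSlopes T) θ.symm))
end
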